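/- arXiv:0905.0670 — 7 statements merged into one kernel-verified Lean document; each statement's English description precedes it below -/
import Mathlib

section
/- Let (x, ξ) be a constant angle spacelike parametrized surface on Ω ⊆ ℝ² with hyperbolic angle θ ≠ 0 relative to a vector U with ⟨U,U⟩ = −1. Then for every p ∈ Ω there exists w ∈ ℝ² with D x(p) w = U + ⟨U, ξ(p)⟩·ξ(p) (the tangential projection of U onto the tangent plane), and for this w one has D ξ(p) w = 0. (Equivalently, the tangential part of U is a principal direction with principal curvature 0, i.e. σ₁₁ = σ₁₂ = 0 in the adapted frame.) -/
set_option maxHeartbeats 1000000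


/-- The Lorentzian inner product on Minkowski 3-space. -/
def ml (u v : Fin 3 → ℝ) : ℝ := u 0 * v 0 + u 1 * v 1 - u 2 * v 2

lemma ml_comm (u v : Fin 3 → ℝ) : ml u v = ml v u := by unfold ml; ring

/-- `ml u ·` as a linear map. -/
def mlL (u : Fin 3 → ℝ) : (Fin 3 → ℝ) →ₗ[ℝ] ℝ where
  toFun v := ml u v
  map_add' a b := by simp only [ml, Pi.add_apply]; ring
  map_smul' c a := by simp only [ml, Pi.smul_apply, smul_eq_mul, RingHom.id_apply]; ring

open ContinuousLinearMap in
/-- Product rule for `ml` of two maps. -/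
lemma ml_hasFDerivAt {f g : (ℝ × ℝ) → Fin 3 → ℝ}
    {f' g' : (ℝ × ℝ) →L[ℝ] (Fin 3 → ℝ)} {p : ℝ × ℝ}
    (hf : HasFDerivAt f f' p) (hg : HasFDerivAt g g' p) :
    HasFDerivAt (fun q => ml (f q) (g q))
      (((f p 0 • ((proj 0 : (Fin 3 → ℝ) →L[ℝ] ℝ).comp g') +
          g p 0 • ((proj 0 : (Fin 3 → ℝ) →L[ℝ] ℝ).comp f')) +
        (f p 1 • ((proj 1 : (Fin 3 → ℝ) →L[ℝ] ℝ).comp g') +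
          g p 1 • ((proj 1 : (Fin 3 → ℝ) →L[ℝ] ℝ).comp f'))) -
        (f p 2 • ((proj 2 : (Fin 3 → ℝ) →L[ℝ] ℝ).comp g') +
          g p 2 • ((proj 2 : (Fin 3 → ℝ) →L[ℝ] ℝ).comp f'))) p := by
  have h0f : HasFDerivAt (fun q => f q 0) ((proj 0 : (Fin 3 → ℝ) →L[ℝ] ℝ).comp f') p :=
    ((ContinuousLinearMap.proj _ : (Fin 3 → ℝ) →L[ℝ] ℝ).hasFDerivAt).comp p hf
  have h1f : HasFDerivAt (fun q => f q 1) ((proj 1 : (Fin 3 → ℝ) →L[ℝ] ℝ).comp f') p :=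
    ((ContinuousLinearMap.proj _ : (Fin 3 → ℝ) →L[ℝ] ℝ).hasFDerivAt).comp p hf
  have h2f : HasFDerivAt (fun q => f q 2) ((proj 2 : (Fin 3 → ℝ) →L[ℝ] ℝ).comp f') p :=
    ((ContinuousLinearMap.proj _ : (Fin 3 → ℝ) →L[ℝ] ℝ).hasFDerivAt).comp p hf
  have h0g : HasFDerivAt (fun q => g q 0) ((proj 0 : (Fin 3 → ℝ) →L[ℝ] ℝ).comp g') p :=
    ((ContinuousLinearMap.proj _ : (Fin 3 → ℝ) →L[ℝ] ℝ).hasFDerivAt).comp p hg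
  have h1g : HasFDerivAt (fun q => g q 1) ((proj 1 : (Fin 3 → ℝ) →L[ℝ] ℝ).comp g') p :=
    ((ContinuousLinearMap.proj _ : (Fin 3 → ℝ) →L[ℝ] ℝ).hasFDerivAt).comp p hg
  have h2g : HasFDerivAt (fun q => g q 2) ((proj 2 : (Fin 3 → ℝ) →L[ℝ] ℝ).comp g') p :=
    ((ContinuousLinearMap.proj _ : (Fin 3 → ℝ) →L[ℝ] ℝ).hasFDerivAt).comp p hg
  exact ((h0f.mul h0g).add (h1f.mul h1g)).sub (h2f.mul h2g)

/-- A map constant on an open set has any `HasFDerivAt`-derivative equal to zero there. -/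
lemma fderiv_zero_of_constant_on {Ω : Set (ℝ × ℝ)} (hΩ : IsOpen Ω) {p : ℝ × ℝ} (hp : p ∈ Ω)
    {F : (ℝ × ℝ) → ℝ} {c : ℝ} (hc : ∀ q ∈ Ω, F q = c)
    {D : (ℝ × ℝ) →L[ℝ] ℝ} (hD : HasFDerivAt F D p) : D = 0 := by
  have h0 : HasFDerivAt F (0 : (ℝ × ℝ) →L[ℝ] ℝ) p := by
    apply (hasFDerivAt_const c p).congr_of_eventuallyEq
    filter_upwards [hΩ.mem_nhds hp] with q hq using hc q hq
  exact hD.unique h0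

/-- For a constant angle spacelike surface with hyperbolic angle `θ ≠ 0` relative to a unit
timelike vector `U`, at each point the tangential projection `U + ⟨U,ξ⟩ξ` of `U` is in the
image of the differential of `x`, say `D x(p) w`, and `D ξ(p) w = 0`: the tangential part of
`U` is a principal direction with principal curvature `0`. -/
theorem constant_angle_projection_principal
    (Ω : Set (ℝ × ℝ)) (hΩ : IsOpen Ω)
    (x ξ : ℝ × ℝ → Fin 3 → ℝ)
    (hx : ContDiffOn ℝ (⊤ : ℕ∞) x Ω) (hξ : ContDiffOn ℝ (⊤ : ℕ∞) ξ Ω)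
    (himm : ∀ p ∈ Ω, Function.Injective (fderiv ℝ x p))
    (hunit : ∀ p ∈ Ω, ml (ξ p) (ξ p) = -1)
    (hperp : ∀ p ∈ Ω, ∀ w : ℝ × ℝ, ml (ξ p) (fderiv ℝ x p w) = 0)
    (U : Fin 3 → ℝ) (hU : ml U U = -1)
    (θ : ℝ) (hθ0 : 0 ≤ θ) (hθ : θ ≠ 0)
    (hangle : ∀ p ∈ Ω, ml (ξ p) U = -Real.cosh θ) :
    ∀ p ∈ Ω, ∃ w : ℝ × ℝ,
      fderiv ℝ x p w = U + ml U (ξ p) • ξ p ∧ fderiv ℝ ξ p w = 0 := by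
  intro p hp
  have hpmem : Ω ∈ nhds p := hΩ.mem_nhds hp
  set n : Fin 3 → ℝ := ξ p with hn_def
  set L : (ℝ × ℝ) →L[ℝ] (Fin 3 → ℝ) := fderiv ℝ x p with hL_def
  set M : (ℝ × ℝ) →L[ℝ] (Fin 3 → ℝ) := fderiv ℝ ξ p with hM_def
  have hxd : DifferentiableOn ℝ x Ω := hx.differentiableOn (by simp)
  have hξd : DifferentiableOn ℝ ξ Ω := hξ.differentiableOn (by simp)
  have hxp : HasFDerivAt x L p := (hxd.differentiableAt hpmem).hasFDerivAt
  have hξp : HasFDerivAt ξ M p := (hξd.differentiableAt hpmem).hasFDerivAt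
  have hnn : ml n n = -1 := hunit p hp
  -- Step A: the range of L is the ml-orthogonal complement of n
  have hφsurj : Function.Surjective (mlL n) := by
    intro c
    refine ⟨(-c) • n, ?_⟩
    show ml n ((-c) • n) = c
    have : ml n ((-c) • n) = (-c) * ml n n := (mlL n).map_smul (-c) n
    rw [this, hnn]; ring
  have hker2 : Module.finrank ℝ (LinearMap.ker (mlL n)) = 2 := by
    have h1 := LinearMap.finrank_range_add_finrank_ker (mlL n)
    rw [LinearMap.range_eq_top.mpr hφsurj] at h1
    simp only [finrank_top] at h1
    have h2 : Module.finrank ℝ (Fin 3 → ℝ) = 3 := by simp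
    have h3 : Module.finrank ℝ ℝ = 1 := Module.finrank_self ℝ
    omega
  have hrange2 : Module.finrank ℝ (LinearMap.range (L : (ℝ × ℝ) →ₗ[ℝ] (Fin 3 → ℝ))) = 2 := by
    have : Module.finrank ℝ (LinearMap.range (L : (ℝ × ℝ) →ₗ[ℝ] (Fin 3 → ℝ)))
        = Module.finrank ℝ (ℝ × ℝ) := LinearMap.finrank_range_of_inj (himm p hp)
    simpa using this
  have hle : LinearMap.range (L : (ℝ × ℝ) →ₗ[ℝ] (Fin 3 → ℝ)) ≤ LinearMap.ker (mlL n) := by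
    rintro _ ⟨v, rfl⟩
    exact hperp p hp v
  have hrange_eq : LinearMap.range (L : (ℝ × ℝ) →ₗ[ℝ] (Fin 3 → ℝ)) = LinearMap.ker (mlL n) :=
    Submodule.eq_of_le_of_finrank_eq hle (by rw [hrange2, hker2])
  -- membership of the tangential projection
  set T : Fin 3 → ℝ := U + ml U n • n with hT_def
  have hTker : T ∈ LinearMap.ker (mlL n) := by
    show ml n T = 0
    have h1 : ml n T = ml n U + ml U n * ml n n := by
      simp only [hT_def, ml, Pi.add_apply, Pi.smul_apply, smul_eq_mul]; ring
    rw [h1, hnn, ml_comm n U]; ring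
  obtain ⟨w, hw⟩ : T ∈ LinearMap.range (L : (ℝ × ℝ) →ₗ[ℝ] (Fin 3 → ℝ)) := by
    rw [hrange_eq]; exact hTker
  refine ⟨w, hw, ?_⟩
  -- Step B: differentiated identities
  -- (1) ml (M v) n = 0
  have hMn : ∀ v : ℝ × ℝ, ml (M v) n = 0 := by
    intro v
    have hD := ml_hasFDerivAt hξp hξp
    have hz := fderiv_zero_of_constant_on hΩ hp (fun q hq => hunit q hq) hD
    have := congrArg (fun (D : (ℝ × ℝ) →L[ℝ] ℝ) => D v) hz
    simp only [ContinuousLinearMap.add_apply, ContinuousLinearMap.sub_apply,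
      ContinuousLinearMap.smul_apply, ContinuousLinearMap.comp_apply,
      ContinuousLinearMap.proj_apply, smul_eq_mul, ContinuousLinearMap.zero_apply] at this
    simp only [ml]
    linarith [this]
  -- (2) ml (M v) U = 0
  have hMU : ∀ v : ℝ × ℝ, ml (M v) U = 0 := by
    intro v
    have hD := ml_hasFDerivAt hξp (hasFDerivAt_const U p)
    have hz := fderiv_zero_of_constant_on hΩ hp (fun q hq => hangle q hq) hD
    have := congrArg (fun (D : (ℝ × ℝ) →L[ℝ] ℝ) => D v) hz
    simp only [ContinuousLinearMap.add_apply, ContinuousLinearMap.sub_apply,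
      ContinuousLinearMap.smul_apply, ContinuousLinearMap.comp_apply,
      ContinuousLinearMap.proj_apply, smul_eq_mul, ContinuousLinearMap.zero_apply,
      ContinuousLinearMap.comp_zero, map_zero, mul_zero, add_zero, zero_add] at this
    simp only [ml]
    linarith [this]
  -- second derivative of x
  have hx1 : ContDiffOn ℝ (⊤ : ℕ∞) (fderiv ℝ x) Ω := hx.fderiv_of_isOpen hΩ (by simp)
  have hx1d : DifferentiableOn ℝ (fderiv ℝ x) Ω := hx1.differentiableOn (by simp)
  set X2 : (ℝ × ℝ) →L[ℝ] (ℝ × ℝ) →L[ℝ] (Fin 3 → ℝ) := fderiv ℝ (fderiv ℝ x) p with hX2_def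
  have hX2p : HasFDerivAt (fderiv ℝ x) X2 p := (hx1d.differentiableAt hpmem).hasFDerivAt
  have hev : ∀ᶠ q in nhds p, HasFDerivAt x (fderiv ℝ x q) q := by
    filter_upwards [hpmem] with q hq
    exact (hxd.differentiableAt (hΩ.mem_nhds hq)).hasFDerivAt
  have hsymm : ∀ v v' : ℝ × ℝ, X2 v v' = X2 v' v := fun v v' =>
    second_derivative_symmetric_of_eventually hev hX2p v v'
  -- (3) ml (M v) (L v') + ml n (X2 v v') = 0
  have hmix : ∀ v v' : ℝ × ℝ, ml (M v) (L v') + ml n (X2 v v') = 0 := by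
    intro v v'
    have hGp : HasFDerivAt (fun q => fderiv ℝ x q v')
        ((ContinuousLinearMap.apply ℝ (Fin 3 → ℝ) v').comp X2) p :=
      ((ContinuousLinearMap.apply ℝ (Fin 3 → ℝ) v').hasFDerivAt).comp p hX2p
    have hD := ml_hasFDerivAt hξp hGp
    have hz := fderiv_zero_of_constant_on hΩ hp (fun q hq => hperp q hq v') hD
    have := congrArg (fun (D : (ℝ × ℝ) →L[ℝ] ℝ) => D v) hz
    simp only [ContinuousLinearMap.add_apply, ContinuousLinearMap.sub_apply,
      ContinuousLinearMap.smul_apply, ContinuousLinearMap.comp_apply,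
      ContinuousLinearMap.proj_apply, smul_eq_mul, ContinuousLinearMap.zero_apply,
      ContinuousLinearMap.apply_apply] at this
    rw [← hL_def] at this
    simp only [ml]
    linarith [this]
  -- symmetry of the second fundamental form
  have hsymm2 : ∀ v v' : ℝ × ℝ, ml (M v) (L v') = ml (M v') (L v) := by
    intro v v'
    have h1 := hmix v v'
    have h2 := hmix v' v
    rw [hsymm v v'] at h1
    linarith
  -- M w is ml-orthogonal to everything
  have key : ∀ z : Fin 3 → ℝ, ml (M w) z = 0 := by
    intro z
    set c : ℝ := ml n z with hc_def
    have hz'ker : z + c • n ∈ LinearMap.ker (mlL n) := by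
      show ml n (z + c • n) = 0
      have : ml n (z + c • n) = ml n z + c * ml n n := by
        simp only [ml, Pi.add_apply, Pi.smul_apply, smul_eq_mul]; ring
      rw [this, hnn, ← hc_def]; ring
    obtain ⟨v, hv⟩ : z + c • n ∈ LinearMap.range (L : (ℝ × ℝ) →ₗ[ℝ] (Fin 3 → ℝ)) := by
      rw [hrange_eq]; exact hz'ker
    have hLv : L v = z + c • n := hv
    have e1 : ml (M w) (L v) = ml (M v) (L w) := hsymm2 w v
    have e2 : ml (M v) (L w) = 0 := by
      have hLw : L w = T := hw
      rw [hLw, hT_def]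
      have : ml (M v) (U + ml U n • n) = ml (M v) U + ml U n * ml (M v) n := by
        simp only [ml, Pi.add_apply, Pi.smul_apply, smul_eq_mul]; ring
      rw [this, hMU v, hMn v]; ring
    have e3 : ml (M w) (L v) = ml (M w) z + c * ml (M w) n := by
      rw [hLv]
      simp only [ml, Pi.add_apply, Pi.smul_apply, smul_eq_mul]; ring
    have h4 := hMn w
    rw [h4, mul_zero, add_zero] at e3
    rw [e2] at e1
    linarith [e1, e3]
  -- conclude M w = 0 by nondegeneracy
  have h0 := key (Pi.single 0 1)
  have h1 := key (Pi.single 1 1)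
  have h2 := key (Pi.single 2 1)
  simp only [ml, Pi.single_apply] at h0 h1 h2
  norm_num at h0 h1 h2
  funext i
  fin_cases i
  · simpa using h0
  · simpa using h1
  · simpa using h2
end

section
/- Let (x, ξ) be a constant angle spacelike parametrized surface on Ω ⊆ ℝ² with hyperbolic angle θ ≠ 0 relative to a vector U with ⟨U,U⟩ = −1. Then for every p ∈ Ω and every w ∈ ℝ² with ⟨D x(p) w, U⟩ = 0, the vector D ξ(p) w is a scalar multiple of D x(p) w. (The tangent direction orthogonal to the projection of U is a principal direction: the Weingarten map is diagonal in the adapted frame, with matrix diag(0, −σ₂₂).) -/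
lemma cross_prop (v n : Fin 3 → ℝ)
    (h01 : v 0 * n 1 - v 1 * n 0 = 0) (h02 : v 0 * n 2 - v 2 * n 0 = 0)
    (h12 : v 1 * n 2 - v 2 * n 1 = 0)
    (hn : n 0 ≠ 0 ∨ n 1 ≠ 0 ∨ n 2 ≠ 0) : ∃ α : ℝ, v = α • n := by
  rcases hn with hj | hj | hj
  · refine ⟨v 0 / n 0, ?_⟩
    funext i; fin_cases i
    · show v 0 = v 0 / n 0 * n 0; field_simp
    · show v 1 = v 0 / n 0 * n 1
      rw [div_mul_eq_mul_div, eq_div_iff hj]; linear_combination -h01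
    · show v 2 = v 0 / n 0 * n 2
      rw [div_mul_eq_mul_div, eq_div_iff hj]; linear_combination -h02
  · refine ⟨v 1 / n 1, ?_⟩
    funext i; fin_cases i
    · show v 0 = v 1 / n 1 * n 0
      rw [div_mul_eq_mul_div, eq_div_iff hj]; linear_combination h01
    · show v 1 = v 1 / n 1 * n 1; field_simp
    · show v 2 = v 1 / n 1 * n 2
      rw [div_mul_eq_mul_div, eq_div_iff hj]; linear_combination -h12
  · refine ⟨v 2 / n 2, ?_⟩
    funext i; fin_cases i
    · show v 0 = v 2 / n 2 * n 0
      rw [div_mul_eq_mul_div, eq_div_iff hj]; linear_combination h02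
    · show v 1 = v 2 / n 2 * n 1
      rw [div_mul_eq_mul_div, eq_div_iff hj]; linear_combination h12
    · show v 2 = v 2 / n 2 * n 2; field_simp

lemma key (ξ U a b : Fin 3 → ℝ) (s : ℝ) (hs : s ^ 2 ≠ 1)
    (h1 : ml ξ ξ = -1) (h2 : ml U U = -1) (h3 : ml ξ U = -s)
    (ha1 : ml ξ a = 0) (ha2 : ml a U = 0)
    (hb1 : ml ξ b = 0) (hb2 : ml b U = 0)
    (ha : a ≠ 0) : ∃ c : ℝ, b = c • a := by
  simp only [ml] at h1 h2 h3 ha1 ha2 hb1 hb2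
  set n : Fin 3 → ℝ := ![ξ 2 * U 1 - ξ 1 * U 2, ξ 0 * U 2 - ξ 2 * U 0,
    ξ 0 * U 1 - ξ 1 * U 0] with hn
  have hn0 : n 0 = ξ 2 * U 1 - ξ 1 * U 2 := rfl
  have hn1 : n 1 = ξ 0 * U 2 - ξ 2 * U 0 := rfl
  have hn2 : n 2 = ξ 0 * U 1 - ξ 1 * U 0 := rfl
  have hmlnn : n 0 * n 0 + n 1 * n 1 - n 2 * n 2 = s ^ 2 - 1 := by
    rw [hn0, hn1, hn2]
    linear_combination (ξ 0 * U 0 + ξ 1 * U 1 - ξ 2 * U 2 - s) * h3 +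
      (-(U 0 * U 0 + U 1 * U 1 - U 2 * U 2)) * h1 + h2
  have hnne : n 0 ≠ 0 ∨ n 1 ≠ 0 ∨ n 2 ≠ 0 := by
    by_contra h
    push_neg at h
    obtain ⟨e0, e1, e2⟩ := h
    rw [e0, e1, e2] at hmlnn
    apply hs
    linarith [hmlnn]
  have hca : ∃ α : ℝ, a = α • n := by
    apply cross_prop _ _ _ _ _ hnne
    · rw [hn0, hn1]; linear_combination U 2 * ha1 - ξ 2 * ha2
    · rw [hn0, hn2]; linear_combination U 1 * ha1 - ξ 1 * ha2
    · rw [hn1, hn2]; linear_combination ξ 0 * ha2 - U 0 * ha1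
  have hcb : ∃ β : ℝ, b = β • n := by
    apply cross_prop _ _ _ _ _ hnne
    · rw [hn0, hn1]; linear_combination U 2 * hb1 - ξ 2 * hb2
    · rw [hn0, hn2]; linear_combination U 1 * hb1 - ξ 1 * hb2
    · rw [hn1, hn2]; linear_combination ξ 0 * hb2 - U 0 * hb1
  obtain ⟨α, hα⟩ := hca
  obtain ⟨β, hβ⟩ := hcb
  have hαne : α ≠ 0 := by
    rintro rfl
    exact ha (by simp [hα])
  refine ⟨β / α, ?_⟩
  rw [hβ, hα, smul_smul]
  congr 1
  field_simp

/-- For a constant angle spacelike surface with hyperbolic angle `θ ≠ 0` relative to a unit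
timelike vector `U`, any tangent direction `D x(p) w` that is orthogonal to `U` is a principal
direction: `D ξ(p) w` is a scalar multiple of `D x(p) w` (the Weingarten map is diagonal in the
adapted frame, with matrix `diag(0, -σ₂₂)`). -/
theorem constant_angle_second_principal_direction
    (Ω : Set (ℝ × ℝ)) (hΩ : IsOpen Ω)
    (x ξ : ℝ × ℝ → Fin 3 → ℝ)
    (hx : ContDiffOn ℝ (⊤ : ℕ∞) x Ω) (hξ : ContDiffOn ℝ (⊤ : ℕ∞) ξ Ω)
    (himm : ∀ p ∈ Ω, Function.Injective (fderiv ℝ x p))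
    (hunit : ∀ p ∈ Ω, ml (ξ p) (ξ p) = -1)
    (hperp : ∀ p ∈ Ω, ∀ w : ℝ × ℝ, ml (ξ p) (fderiv ℝ x p w) = 0)
    (U : Fin 3 → ℝ) (hU : ml U U = -1)
    (θ : ℝ) (hθ0 : 0 ≤ θ) (hθ : θ ≠ 0)
    (hangle : ∀ p ∈ Ω, ml (ξ p) U = -Real.cosh θ) :
    ∀ p ∈ Ω, ∀ w : ℝ × ℝ, ml (fderiv ℝ x p w) U = 0 →
      ∃ c : ℝ, fderiv ℝ ξ p w = c • fderiv ℝ x p w := by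
  intro p hp w hw
  have hmem : Ω ∈ nhds p := hΩ.mem_nhds hp
  have hξd : DifferentiableAt ℝ ξ p :=
    ((hξ p hp).contDiffAt hmem).differentiableAt (by simp)
  set F := fderiv ℝ ξ p with hFdef
  have hF : HasFDerivAt ξ F p := hξd.hasFDerivAt
  have hFi : ∀ i : Fin 3, HasFDerivAt (fun q => ξ q i)
      ((ContinuousLinearMap.proj i).comp F) p := fun i =>
    ((ContinuousLinearMap.proj i : (Fin 3 → ℝ) →L[ℝ] ℝ).hasFDerivAt).comp p hF
  -- derivative of the angle function vanishes
  have hbU : ml (F w) U = 0 := by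
    have hg : HasFDerivAt (fun q => ml (ξ q) U)
        ((U 0 • ((ContinuousLinearMap.proj 0).comp F) +
          U 1 • ((ContinuousLinearMap.proj 1).comp F)) -
          U 2 • ((ContinuousLinearMap.proj 2).comp F)) p := by
      have := (((hFi 0).mul_const (U 0)).add ((hFi 1).mul_const (U 1))).sub
        ((hFi 2).mul_const (U 2))
      exact this
    have hgc : HasFDerivAt (fun q => ml (ξ q) U) (0 : (ℝ × ℝ) →L[ℝ] ℝ) p := by
      refine (hasFDerivAt_const (-Real.cosh θ) p).congr_of_eventuallyEq ?_
      filter_upwards [hmem] with q hq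
      exact hangle q hq
    have h0 := hg.unique hgc
    have := congrArg (fun L => L w) h0
    simpa [ml, mul_comm] using this
  -- derivative of the unit-norm function vanishes
  have hbξ : ml (ξ p) (F w) = 0 := by
    have hg : HasFDerivAt (fun q => ml (ξ q) (ξ q))
        (((ξ p 0 • ((ContinuousLinearMap.proj 0).comp F) +
           ξ p 0 • ((ContinuousLinearMap.proj 0).comp F)) +
          (ξ p 1 • ((ContinuousLinearMap.proj 1).comp F) +
           ξ p 1 • ((ContinuousLinearMap.proj 1).comp F))) -
          (ξ p 2 • ((ContinuousLinearMap.proj 2).comp F) +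
           ξ p 2 • ((ContinuousLinearMap.proj 2).comp F))) p := by
      have := (((hFi 0).mul (hFi 0)).add ((hFi 1).mul (hFi 1))).sub
        ((hFi 2).mul (hFi 2))
      exact this
    have hgc : HasFDerivAt (fun q => ml (ξ q) (ξ q)) (0 : (ℝ × ℝ) →L[ℝ] ℝ) p := by
      refine (hasFDerivAt_const (-1 : ℝ) p).congr_of_eventuallyEq ?_
      filter_upwards [hmem] with q hq
      exact hunit q hq
    have h0 := hg.unique hgc
    have := congrArg (fun L => L w) h0
    simp only [ContinuousLinearMap.add_apply, ContinuousLinearMap.sub_apply,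
      ContinuousLinearMap.smul_apply, ContinuousLinearMap.comp_apply,
      ContinuousLinearMap.proj_apply, ContinuousLinearMap.zero_apply,
      smul_eq_mul] at this
    simp only [ml]
    linarith
  by_cases hw0 : w = 0
  · exact ⟨0, by simp [hw0]⟩
  · have hane : fderiv ℝ x p w ≠ 0 := by
      intro h
      apply hw0
      apply himm p hp
      simpa using h
    have hs : (Real.cosh θ) ^ 2 ≠ 1 := by
      have h1 : 1 < Real.cosh θ := Real.one_lt_cosh.mpr hθ
      nlinarith
    have h3 : ml (ξ p) U = -Real.cosh θ := hangle p hp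
    obtain ⟨c, hc⟩ := key (ξ p) U (fderiv ℝ x p w) (F w) (Real.cosh θ) hs
      (hunit p hp) hU h3 (hperp p hp w) hw hbξ hbU hane
    exact ⟨c, hc⟩
end

section
/- Every constant angle spacelike parametrized surface is flat: if (x, ξ) is a constant angle spacelike parametrized surface on Ω ⊆ ℝ² with hyperbolic angle θ relative to a vector U with ⟨U,U⟩ = −1, then for every p ∈ Ω the derivative of the Gauss map D ξ(p) : ℝ² → ℝ³ is not injective, i.e. the partial derivatives ∂₁ξ(p) and ∂₂ξ(p) are linearly dependent; equivalently the product of the two principal curvatures (the Gaussian curvature) vanishes identically. -/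
/-- Rigidity: a unit timelike vector making Lorentzian product `-1` with a unit timelike
vector `u` equals `u`. -/
lemma eq_of_ml (v u : Fin 3 → ℝ) (hv : ml v v = -1) (hvu : ml v u = -1)
    (hu : ml u u = -1) : v = u := by
  simp only [ml] at *
  have h2 : u 2 ^ 2 = 1 + u 0 ^ 2 + u 1 ^ 2 := by nlinarith
  have key : (v 0 - u 0) ^ 2 + (v 1 - u 1) ^ 2 +
      (u 0 * (v 1 - u 1) - u 1 * (v 0 - u 0)) ^ 2 = 0 := by
    nlinarith [sq_nonneg (u 0 * (v 1 - u 1) - u 1 * (v 0 - u 0)),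
      sq_nonneg (v 0 - u 0), sq_nonneg (v 1 - u 1),
      sq_nonneg (u 0 * (v 0 - u 0) + u 1 * (v 1 - u 1) - u 2 * (v 2 - u 2))]
  have h0 : v 0 = u 0 := by
    nlinarith [sq_nonneg (v 0 - u 0), sq_nonneg (v 1 - u 1),
      sq_nonneg (u 0 * (v 1 - u 1) - u 1 * (v 0 - u 0))]
  have h1 : v 1 = u 1 := by
    nlinarith [sq_nonneg (v 0 - u 0), sq_nonneg (v 1 - u 1),
      sq_nonneg (u 0 * (v 1 - u 1) - u 1 * (v 0 - u 0))]
  have hu2 : u 2 ≠ 0 := by intro h; rw [h] at hu; nlinarith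
  have h2' : v 2 = u 2 := by
    have hml : v 0 * v 0 + v 1 * v 1 - v 2 * v 2 = -1 := hv
    rw [h0, h1] at hvu hml
    have h3 : v 2 * u 2 = u 2 * u 2 := by linarith
    exact mul_right_cancel₀ hu2 h3
  funext i; fin_cases i <;> assumption

/-- Two vectors proportional to a common direction are linearly dependent. -/
lemma pair_dep {a0 a1 a2 b0 b1 b2 m0 m1 c : ℝ} (hc : c ≠ 0)
    (ha0 : a0 * c = a2 * m0) (ha1 : a1 * c = a2 * m1)
    (hb0 : b0 * c = b2 * m0) (hb1 : b1 * c = b2 * m1) :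
    ∃ s t : ℝ, ¬(s = 0 ∧ t = 0) ∧ s * a0 + t * b0 = 0 ∧ s * a1 + t * b1 = 0 ∧
      s * a2 + t * b2 = 0 := by
  by_cases h : a2 = 0
  · have h0 : a0 = 0 := by
      have : a0 * c = 0 := by rw [ha0, h]; ring
      rcases mul_eq_zero.mp this with h' | h'
      · exact h'
      · exact absurd h' hc
    have h1 : a1 = 0 := by
      have : a1 * c = 0 := by rw [ha1, h]; ring
      rcases mul_eq_zero.mp this with h' | h'
      · exact h'
      · exact absurd h' hc
    exact ⟨1, 0, by norm_num, by rw [h0]; ring, by rw [h1]; ring, by rw [h]; ring⟩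
  · refine ⟨b2, -a2, fun hh => h (by linarith [hh.2]), ?_, ?_, by ring⟩
    · have key : (b2 * a0 + -a2 * b0) * c = 0 * c := by
        linear_combination b2 * ha0 - a2 * hb0
      exact mul_right_cancel₀ hc key
    · have key : (b2 * a1 + -a2 * b1) * c = 0 * c := by
        linear_combination b2 * ha1 - a2 * hb1
      exact mul_right_cancel₀ hc key

/-- Two vectors Lorentz-orthogonal to a unit timelike vector `n` and to a spacelike vector `u`
orthogonal to `n` are linearly dependent. -/
lemma dep (n u a b : Fin 3 → ℝ) (hn : ml n n = -1) (hun : ml u n = 0) (huu : 0 < ml u u)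
    (han : ml a n = 0) (hau : ml a u = 0) (hbn : ml b n = 0) (hbu : ml b u = 0) :
    ∃ s t : ℝ, ¬(s = 0 ∧ t = 0) ∧ ∀ i, s * a i + t * b i = 0 := by
  simp only [ml] at hn hun huu han hau hbn hbu
  have ha01 : a 0 * (n 0 * u 2 - n 2 * u 0) = a 1 * (n 2 * u 1 - n 1 * u 2) := by
    linear_combination u 2 * han - n 2 * hau
  have ha02 : a 0 * (n 0 * u 1 - n 1 * u 0) = a 2 * (n 2 * u 1 - n 1 * u 2) := by
    linear_combination u 1 * han - n 1 * hau
  have ha12 : a 1 * (n 0 * u 1 - n 1 * u 0) = a 2 * (n 0 * u 2 - n 2 * u 0) := by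
    linear_combination (-(u 0)) * han + n 0 * hau
  have hb01 : b 0 * (n 0 * u 2 - n 2 * u 0) = b 1 * (n 2 * u 1 - n 1 * u 2) := by
    linear_combination u 2 * hbn - n 2 * hbu
  have hb02 : b 0 * (n 0 * u 1 - n 1 * u 0) = b 2 * (n 2 * u 1 - n 1 * u 2) := by
    linear_combination u 1 * hbn - n 1 * hbu
  have hb12 : b 1 * (n 0 * u 1 - n 1 * u 0) = b 2 * (n 0 * u 2 - n 2 * u 0) := by
    linear_combination (-(u 0)) * hbn + n 0 * hbu
  by_cases h2 : n 0 * u 1 - n 1 * u 0 ≠ 0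
  · obtain ⟨s, t, hst, e0, e1, e2⟩ := pair_dep h2 ha02 ha12 hb02 hb12
    exact ⟨s, t, hst, fun i => by fin_cases i <;> assumption⟩
  by_cases h1 : n 0 * u 2 - n 2 * u 0 ≠ 0
  · obtain ⟨s, t, hst, e0, e2, e1⟩ := pair_dep h1 ha01 ha12.symm hb01 hb12.symm
    exact ⟨s, t, hst, fun i => by fin_cases i <;> assumption⟩
  by_cases h0 : n 2 * u 1 - n 1 * u 2 ≠ 0
  · obtain ⟨s, t, hst, e1, e2, e0⟩ := pair_dep h0 ha01.symm ha02.symm hb01.symm hb02.symm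
    exact ⟨s, t, hst, fun i => by fin_cases i <;> assumption⟩
  exfalso
  push_neg at h0 h1 h2
  have hn2 : n 2 ≠ 0 := by
    intro h; rw [h] at hn; nlinarith [sq_nonneg (n 0), sq_nonneg (n 1)]
  have hu2 : u 2 = 0 := by
    linear_combination u 2 * hn - n 0 * h1 + n 1 * h0 - n 2 * hun
  have hu0 : u 0 = 0 := by
    have h' : n 2 * u 0 = 0 := by rw [hu2] at h1; linarith
    rcases mul_eq_zero.mp h' with h | h
    · exact absurd h hn2
    · exact h
  have hu1 : u 1 = 0 := by
    have h' : n 2 * u 1 = 0 := by rw [hu2] at h0; linarith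
    rcases mul_eq_zero.mp h' with h | h
    · exact absurd h hn2
    · exact h
  rw [hu0, hu1, hu2] at huu
  norm_num at huu

/-- Differentiating a constant Lorentzian product. -/
lemma deriv_of_ml_const {p : ℝ × ℝ} {f g : ℝ × ℝ → Fin 3 → ℝ} {c : ℝ}
    (hf : DifferentiableAt ℝ f p) (hg : DifferentiableAt ℝ g p)
    (hc : ∀ᶠ q in nhds p, ml (f q) (g q) = c) (w : ℝ × ℝ) :
    ml (fderiv ℝ f p w) (g p) + ml (f p) (fderiv ℝ g p w) = 0 := by
  have hfi : ∀ i : Fin 3, HasFDerivAt (fun q => f q i)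
      ((ContinuousLinearMap.proj i).comp (fderiv ℝ f p)) p := fun i =>
    (ContinuousLinearMap.proj i : (Fin 3 → ℝ) →L[ℝ] ℝ).hasFDerivAt.comp p hf.hasFDerivAt
  have hgi : ∀ i : Fin 3, HasFDerivAt (fun q => g q i)
      ((ContinuousLinearMap.proj i).comp (fderiv ℝ g p)) p := fun i =>
    (ContinuousLinearMap.proj i : (Fin 3 → ℝ) →L[ℝ] ℝ).hasFDerivAt.comp p hg.hasFDerivAt
  have H := (((hfi 0).mul (hgi 0)).add ((hfi 1).mul (hgi 1))).sub ((hfi 2).mul (hgi 2))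
  have H' : HasFDerivAt (fun q => ml (f q) (g q)) _ p := H
  have H0 : HasFDerivAt (fun q => ml (f q) (g q)) (0 : (ℝ × ℝ) →L[ℝ] ℝ) p :=
    (hasFDerivAt_const c p).congr_of_eventuallyEq hc
  have hD := H'.unique H0
  have hw := congrArg (fun (L : (ℝ × ℝ) →L[ℝ] ℝ) => L w) hD
  simp only [ContinuousLinearMap.add_apply, ContinuousLinearMap.sub_apply,
    ContinuousLinearMap.smul_apply, ContinuousLinearMap.comp_apply,
    ContinuousLinearMap.proj_apply, ContinuousLinearMap.zero_apply, smul_eq_mul] at hw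
  simp only [ml]
  linarith [hw]

/-- Every constant angle spacelike surface is flat: the differential of the Gauss map `ξ` is
nowhere injective, i.e. the partial derivatives `∂₁ξ(p)` and `∂₂ξ(p)` are linearly dependent,
so the Gaussian curvature (product of the principal curvatures) vanishes identically. -/
theorem constant_angle_surface_flat
    (Ω : Set (ℝ × ℝ)) (hΩ : IsOpen Ω)
    (x ξ : ℝ × ℝ → Fin 3 → ℝ)
    (hx : ContDiffOn ℝ (⊤ : ℕ∞) x Ω) (hξ : ContDiffOn ℝ (⊤ : ℕ∞) ξ Ω)
    (himm : ∀ p ∈ Ω, Function.Injective (fderiv ℝ x p))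
    (hunit : ∀ p ∈ Ω, ml (ξ p) (ξ p) = -1)
    (hperp : ∀ p ∈ Ω, ∀ w : ℝ × ℝ, ml (ξ p) (fderiv ℝ x p w) = 0)
    (U : Fin 3 → ℝ) (hU : ml U U = -1)
    (θ : ℝ) (hθ0 : 0 ≤ θ)
    (hangle : ∀ p ∈ Ω, ml (ξ p) U = -Real.cosh θ) :
    ∀ p ∈ Ω, ¬ Function.Injective (fderiv ℝ ξ p) ∧
      ¬ LinearIndependent ℝ ![fderiv ℝ ξ p (1, 0), fderiv ℝ ξ p (0, 1)] := by
  intro p hp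
  have hmem : Ω ∈ nhds p := hΩ.mem_nhds hp
  have hdξ : DifferentiableAt ℝ ξ p :=
    ((hξ.differentiableOn (by simp)) p hp).differentiableAt hmem
  have H1 : ∀ w, ml (fderiv ℝ ξ p w) (ξ p) = 0 := by
    intro w
    have hc : ∀ᶠ q in nhds p, ml (ξ q) (ξ q) = -1 :=
      Filter.eventually_of_mem hmem fun q hq => hunit q hq
    have h := deriv_of_ml_const hdξ hdξ hc w
    have hsym : ml (ξ p) (fderiv ℝ ξ p w) = ml (fderiv ℝ ξ p w) (ξ p) := by
      simp only [ml]; ring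
    linarith [h, hsym.symm.le]
  have H2 : ∀ w, ml (fderiv ℝ ξ p w) U = 0 := by
    intro w
    have hc : ∀ᶠ q in nhds p, ml (ξ q) ((fun _ : ℝ × ℝ => U) q) = -Real.cosh θ :=
      Filter.eventually_of_mem hmem fun q hq => hangle q hq
    have h := deriv_of_ml_const hdξ (differentiableAt_const U) hc w
    rw [fderiv_const_apply] at h
    have hsym : ml (ξ p) U = ml U (ξ p) := by simp only [ml]; ring
    have h0 : ml (ξ p) ((0 : (ℝ × ℝ) →L[ℝ] Fin 3 → ℝ) w) = 0 := by
      simp [ml]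
    have hsym2 : ml (ξ p) (fderiv ℝ ξ p w) = ml (fderiv ℝ ξ p w) (ξ p) := by
      simp only [ml]; ring
    -- h : ml (fderiv ℝ ξ p w) U + ml (ξ p) (0 w) = 0
    simp only [ml] at h h0 ⊢
    linarith
  obtain ⟨s, t, hst, hzero⟩ :
      ∃ s t : ℝ, ¬(s = 0 ∧ t = 0) ∧
        ∀ i, s * fderiv ℝ ξ p (1, 0) i + t * fderiv ℝ ξ p (0, 1) i = 0 := by
    rcases eq_or_lt_of_le hθ0 with hθ | hθ
    · -- θ = 0 : ξ is locally the constant U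
      have hev : ξ =ᶠ[nhds p] fun _ => U := by
        filter_upwards [hmem] with q hq
        refine eq_of_ml _ _ (hunit q hq) ?_ hU
        rw [hangle q hq, ← hθ, Real.cosh_zero]
      have hL0 : fderiv ℝ ξ p = 0 := by
        rw [hev.fderiv_eq]; exact fderiv_const_apply U
      refine ⟨1, 0, by norm_num, fun i => ?_⟩
      rw [hL0]; simp
    · -- θ > 0 : use the spacelike projection of U
      have hsinh : 0 < Real.sinh θ := Real.sinh_pos_iff.mpr hθ
      set u : Fin 3 → ℝ := fun i => U i - Real.cosh θ * ξ p i with hu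
      have hufml : ∀ v : Fin 3 → ℝ, ml v u = ml v U - Real.cosh θ * ml v (ξ p) := by
        intro v; simp only [ml, hu]; ring
      have hun : ml u (ξ p) = 0 := by
        simp only [ml, hu]
        have h1 := hangle p hp
        have h2 := hunit p hp
        simp only [ml] at h1 h2
        linear_combination h1 - Real.cosh θ * h2
      have huu : 0 < ml u u := by
        have heq : ml u u = Real.sinh θ ^ 2 := by
          simp only [ml, hu]
          have h1 := hangle p hp
          have h2 := hunit p hp
          have h3 := hU
          simp only [ml] at h1 h2 h3
          have h4 := Real.cosh_sq θ
          linear_combination h3 - 2 * Real.cosh θ * h1 + Real.cosh θ ^ 2 * h2 + h4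
        rw [heq]; exact pow_pos hsinh 2
      have han := H1 (1, 0)
      have hbn := H1 (0, 1)
      have hau : ml (fderiv ℝ ξ p (1, 0)) u = 0 := by
        rw [hufml, H2 (1, 0), H1 (1, 0)]; ring
      have hbu : ml (fderiv ℝ ξ p (0, 1)) u = 0 := by
        rw [hufml, H2 (0, 1), H1 (0, 1)]; ring
      exact dep (ξ p) u _ _ (hunit p hp) hun huu han hau hbn hbu
  constructor
  · intro hinj
    have hsum : fderiv ℝ ξ p (s, t) = 0 := by
      have hdecomp : ((s, t) : ℝ × ℝ) = s • ((1 : ℝ), (0 : ℝ)) + t • ((0 : ℝ), (1 : ℝ)) := by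
        simp [Prod.ext_iff]
      rw [hdecomp, map_add, map_smul, map_smul]
      funext i
      simpa using hzero i
    have heq : fderiv ℝ ξ p (s, t) = fderiv ℝ ξ p 0 := by rw [hsum, map_zero]
    have h0 := hinj heq
    exact hst ⟨congrArg Prod.fst h0, congrArg Prod.snd h0⟩
  · intro hli
    have hsum : ∑ i : Fin 2, (![s, t]) i • (![fderiv ℝ ξ p (1, 0), fderiv ℝ ξ p (0, 1)]) i
        = 0 := by
      rw [Fin.sum_univ_two]
      simp only [Matrix.cons_val_zero, Matrix.cons_val_one, Matrix.head_cons]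
      funext i
      simpa using hzero i
    have h := Fintype.linearIndependent_iff.mp hli ![s, t] hsum
    exact hst ⟨h 0, h 1⟩
end

section
/- Let (x, ξ) be a constant angle spacelike parametrized surface on Ω ⊆ ℝ² with hyperbolic angle θ ≠ 0 relative to a vector U with ⟨U,U⟩ = −1. Then around every point there exist adapted coordinates in which the first fundamental form is du² + β² dv²: for every p ∈ Ω there are open sets V ⊆ ℝ² and W ⊆ Ω with p ∈ W and a diffeomorphism φ : V → W such that y := x ∘ φ satisfies ⟨∂_u y, ∂_u y⟩ = 1 and ⟨∂_u y, ∂_v y⟩ = 0 at every point of V (i.e. E = 1 and F = 0). -/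
lemma ml_add (u v w : Fin 3 → ℝ) : ml u (v + w) = ml u v + ml u w := by simp [ml]; ring

lemma ml_smul (u : Fin 3 → ℝ) (a : ℝ) (v : Fin 3 → ℝ) : ml u (a • v) = a * ml u v := by
  simp [ml]; ring

lemma hasDerivAt_ml {f g : ℝ → Fin 3 → ℝ} {f' g' : Fin 3 → ℝ} {t : ℝ}
    (hf : HasDerivAt f f' t) (hg : HasDerivAt g g' t) :
    HasDerivAt (fun t => ml (f t) (g t)) (ml f' (g t) + ml (f t) g') t := by
  have hf0 := hasDerivAt_pi.1 hf 0
  have hf1 := hasDerivAt_pi.1 hf 1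
  have hf2 := hasDerivAt_pi.1 hf 2
  have hg0 := hasDerivAt_pi.1 hg 0
  have hg1 := hasDerivAt_pi.1 hg 1
  have hg2 := hasDerivAt_pi.1 hg 2
  have := ((hf0.mul hg0).add (hf1.mul hg1)).sub (hf2.mul hg2)
  convert this using 1
  all_goals first | rfl | (simp [ml]; ring)

lemma contDiffOn_ml {E : Type*} [NormedAddCommGroup E] [NormedSpace ℝ E]
    {f g : E → Fin 3 → ℝ} {s : Set E} (hf : ContDiffOn ℝ (⊤ : ℕ∞) f s) (hg : ContDiffOn ℝ (⊤ : ℕ∞) g s) :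
    ContDiffOn ℝ (⊤ : ℕ∞) (fun q => ml (f q) (g q)) s := by
  have cf : ∀ i, ContDiffOn ℝ (⊤ : ℕ∞) (fun q => f q i) s := fun i =>
    (ContinuousLinearMap.proj (R := ℝ) (φ := fun _ : Fin 3 => ℝ) i).contDiff.comp_contDiffOn hf
  have cg : ∀ i, ContDiffOn ℝ (⊤ : ℕ∞) (fun q => g q i) s := fun i =>
    (ContinuousLinearMap.proj (R := ℝ) (φ := fun _ : Fin 3 => ℝ) i).contDiff.comp_contDiffOn hg
  exact (((cf 0).mul (cg 0)).add ((cf 1).mul (cg 1))).sub ((cf 2).mul (cg 2))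

/-- Key linear algebra: if `n` is a unit timelike vector and `L : ℝ² → ℝ³` is injective with
image ml-orthogonal to `n`, then the image of `L` is exactly the ml-orthogonal of `n`, and
a vector ml-orthogonal to everything (to `n` and to the image) is zero. -/
lemma ml_basis (n : Fin 3 → ℝ) (hn : ml n n = -1) (L : (ℝ × ℝ) →L[ℝ] (Fin 3 → ℝ))
    (hL : Function.Injective L) (hp : ∀ w, ml n (L w) = 0) :
    (∀ T : Fin 3 → ℝ, ml T n = 0 → ∃ w, L w = T) ∧
    (∀ v : Fin 3 → ℝ, ml v n = 0 → (∀ w, ml v (L w) = 0) → v = 0) := by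
  classical
  -- the functional u ↦ ml u n
  let μ : (Fin 3 → ℝ) →ₗ[ℝ] ℝ :=
    { toFun := fun u => ml u n
      map_add' := by intro a b; simp [ml]; ring
      map_smul' := by intro a b; simp [ml]; ring }
  have hμn : μ n = -1 := hn
  have hμsurj : Function.Surjective μ := by
    intro r
    refine ⟨(-r) • n, ?_⟩
    have : μ ((-r) • n) = ml ((-r) • n) n := rfl
    rw [this, ml_comm, ml_smul, ml_comm, hn]; ring
  -- dimensions
  have hfin3 : Module.finrank ℝ (Fin 3 → ℝ) = 3 := by simp
  have hfin2 : Module.finrank ℝ (ℝ × ℝ) = 2 := by simp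
  have hker : Module.finrank ℝ (LinearMap.ker μ) = 2 := by
    have h1 := LinearMap.finrank_range_add_finrank_ker μ
    have h2 : Module.finrank ℝ (LinearMap.range μ) = 1 := by
      rw [LinearMap.range_eq_top.2 hμsurj]; simp
    rw [hfin3, h2] at h1; omega
  have hrange : Module.finrank ℝ (LinearMap.range (L : (ℝ × ℝ) →ₗ[ℝ] (Fin 3 → ℝ))) = 2 := by
    rw [LinearMap.finrank_range_of_inj hL, hfin2]
  have hle : LinearMap.range (L : (ℝ × ℝ) →ₗ[ℝ] (Fin 3 → ℝ)) ≤ LinearMap.ker μ := by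
    rintro u ⟨w, rfl⟩
    show ml (L w) n = 0
    rw [ml_comm]; exact hp w
  have heq : LinearMap.range (L : (ℝ × ℝ) →ₗ[ℝ] (Fin 3 → ℝ)) = LinearMap.ker μ := by
    apply Submodule.eq_of_le_of_finrank_le hle
    rw [hker, hrange]
  have hpart1 : ∀ T : Fin 3 → ℝ, ml T n = 0 → ∃ w, L w = T := by
    intro T hT
    have : T ∈ LinearMap.ker μ := hT
    rw [← heq] at this
    exact this
  refine ⟨hpart1, ?_⟩
  intro v hv hvL
  have hall : ∀ u : Fin 3 → ℝ, ml v u = 0 := by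
    intro u
    have hdecomp : u = (-(ml u n)) • n + (u + (ml u n) • n) := by
      funext i; simp only [Pi.add_apply, Pi.smul_apply, Pi.neg_apply, smul_eq_mul, neg_mul]; ring
    have hu' : ml (u + (ml u n) • n) n = 0 := by
      simp [ml] at hn ⊢; linear_combination (u 0 * n 0 + u 1 * n 1 - u 2 * n 2) * hn
    obtain ⟨w, hw⟩ := hpart1 _ hu'
    rw [hdecomp, ml_add, ml_smul, hv, ← hw, hvL w]
    ring
  have h0 := hall (fun j => if j = 0 then 1 else 0)
  have h1 := hall (fun j => if j = 1 then 1 else 0)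
  have h2 := hall (fun j => if j = 2 then 1 else 0)
  simp [ml] at h0 h1 h2
  funext i
  fin_cases i <;> simp_all

example : True := trivial

lemma ml_sub (u v w : Fin 3 → ℝ) : ml u (v - w) = ml u v - ml u w := by simp [ml]; ring

lemma ml_zero (u : Fin 3 → ℝ) : ml u 0 = 0 := by simp [ml]

/-- A continuous linear map on `ℝ × ℝ` (any codomain) is determined by its values on the basis. -/
lemma clm_apply_eq' {F : Type*} [NormedAddCommGroup F] [NormedSpace ℝ F]
    (M : ℝ × ℝ →L[ℝ] F) (v : ℝ × ℝ) :
    M v = v.1 • M (1, 0) + v.2 • M (0, 1) := by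
  have hv : v = v.1 • ((1 : ℝ), (0 : ℝ)) + v.2 • ((0 : ℝ), (1 : ℝ)) := by simp [Prod.ext_iff]
  conv_lhs => rw [hv]
  rw [map_add, map_smul, map_smul]

/-- The continuous linear functional `v ↦ ml v U`. -/
noncomputable def mlCLM (U : Fin 3 → ℝ) : (Fin 3 → ℝ) →L[ℝ] ℝ :=
  U 0 • ContinuousLinearMap.proj (R := ℝ) (φ := fun _ : Fin 3 => ℝ) 0 +
  U 1 • ContinuousLinearMap.proj (R := ℝ) (φ := fun _ : Fin 3 => ℝ) 1 -
  U 2 • ContinuousLinearMap.proj (R := ℝ) (φ := fun _ : Fin 3 => ℝ) 2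

lemma mlCLM_apply (U v : Fin 3 → ℝ) : mlCLM U v = ml v U := by
  simp [mlCLM, ml]; ring

section D2

/-- determinant of a continuous linear map on `ℝ × ℝ`. -/
def d2 (M : ℝ × ℝ →L[ℝ] ℝ × ℝ) : ℝ :=
  (M (1, 0)).1 * (M (0, 1)).2 - (M (1, 0)).2 * (M (0, 1)).1

lemma clm_apply_eq (M : ℝ × ℝ →L[ℝ] ℝ × ℝ) (v : ℝ × ℝ) :
    M v = v.1 • M (1, 0) + v.2 • M (0, 1) := by
  have hv : v = v.1 • ((1 : ℝ), (0 : ℝ)) + v.2 • ((0 : ℝ), (1 : ℝ)) := by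
    simp [Prod.ext_iff]
  conv_lhs => rw [hv]
  rw [map_add, map_smul, map_smul]

lemma d2_comp (M N : ℝ × ℝ →L[ℝ] ℝ × ℝ) : d2 (M.comp N) = d2 M * d2 N := by
  simp only [d2, ContinuousLinearMap.comp_apply]
  rw [clm_apply_eq M (N (1, 0)), clm_apply_eq M (N (0, 1))]
  simp only [Prod.fst_add, Prod.snd_add, Prod.smul_fst, Prod.smul_snd, smul_eq_mul]
  ring

lemma d2_id : d2 (ContinuousLinearMap.id ℝ (ℝ × ℝ)) = 1 := by simp [d2]

lemma continuous_d2 : Continuous d2 := by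
  have h1 : Continuous fun M : ℝ × ℝ →L[ℝ] ℝ × ℝ => M (1, 0) :=
    (ContinuousLinearMap.apply ℝ (ℝ × ℝ) ((1 : ℝ), (0 : ℝ))).continuous
  have h2 : Continuous fun M : ℝ × ℝ →L[ℝ] ℝ × ℝ => M (0, 1) :=
    (ContinuousLinearMap.apply ℝ (ℝ × ℝ) ((0 : ℝ), (1 : ℝ))).continuous
  exact ((continuous_fst.comp h1).mul (continuous_snd.comp h2)).sub
    ((continuous_snd.comp h1).mul (continuous_fst.comp h2))

/-- explicit inverse of a `2×2` continuous linear map with nonzero determinant. -/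
noncomputable def d2inv (M : ℝ × ℝ →L[ℝ] ℝ × ℝ) : ℝ × ℝ →L[ℝ] ℝ × ℝ :=
  ContinuousLinearMap.prod
    (((M (0, 1)).2 / d2 M) • (ContinuousLinearMap.fst ℝ ℝ ℝ) +
      (-(M (0, 1)).1 / d2 M) • (ContinuousLinearMap.snd ℝ ℝ ℝ))
    ((-(M (1, 0)).2 / d2 M) • (ContinuousLinearMap.fst ℝ ℝ ℝ) +
      ((M (1, 0)).1 / d2 M) • (ContinuousLinearMap.snd ℝ ℝ ℝ))

lemma d2inv_apply (M : ℝ × ℝ →L[ℝ] ℝ × ℝ) (v : ℝ × ℝ) :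
    d2inv M v = (((M (0, 1)).2 * v.1 - (M (0, 1)).1 * v.2) / d2 M,
      (-(M (1, 0)).2 * v.1 + (M (1, 0)).1 * v.2) / d2 M) := by
  simp only [d2inv, ContinuousLinearMap.prod_apply, ContinuousLinearMap.add_apply,
    ContinuousLinearMap.coe_smul', Pi.smul_apply, ContinuousLinearMap.coe_fst',
    ContinuousLinearMap.coe_snd', smul_eq_mul, Prod.ext_iff]
  constructor <;> ring

lemma d2inv_left (M : ℝ × ℝ →L[ℝ] ℝ × ℝ) (h : d2 M ≠ 0) : ∀ v, d2inv M (M v) = v := by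
  intro v
  rw [d2inv_apply, clm_apply_eq M v]
  simp only [d2] at h ⊢
  simp only [Prod.fst_add, Prod.snd_add, Prod.smul_fst, Prod.smul_snd, smul_eq_mul, Prod.ext_iff]
  have h' : (M (0, 1)).2 * (M (1, 0)).1 - (M (0, 1)).1 * (M (1, 0)).2 ≠ 0 := by
    intro h'; apply h; linarith
  constructor <;> (field_simp; ring)

lemma d2inv_right (M : ℝ × ℝ →L[ℝ] ℝ × ℝ) (h : d2 M ≠ 0) : ∀ v, M (d2inv M v) = v := by
  intro v
  rw [d2inv_apply, clm_apply_eq M]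
  simp only [d2] at h ⊢
  simp only [Prod.fst_add, Prod.snd_add, Prod.smul_fst, Prod.smul_snd, smul_eq_mul, Prod.ext_iff]
  have h' : (M (0, 1)).2 * (M (1, 0)).1 - (M (0, 1)).1 * (M (1, 0)).2 ≠ 0 := by
    intro h'; apply h; linarith
  constructor <;> (field_simp; ring)

/-- continuous linear equivalence from nonzero determinant. -/
noncomputable def d2equiv (M : ℝ × ℝ →L[ℝ] ℝ × ℝ) (h : d2 M ≠ 0) : (ℝ × ℝ) ≃L[ℝ] (ℝ × ℝ) :=
  ContinuousLinearEquiv.equivOfInverse M (d2inv M) (d2inv_left M h) (d2inv_right M h)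

lemma d2equiv_coe (M : ℝ × ℝ →L[ℝ] ℝ × ℝ) (h : d2 M ≠ 0) :
    (d2equiv M h : ℝ × ℝ →L[ℝ] ℝ × ℝ) = M := rfl

lemma d2_injective (M : ℝ × ℝ →L[ℝ] ℝ × ℝ) (h : d2 M ≠ 0) : Function.Injective M := by
  intro a b hab
  have := congrArg (d2inv M) hab
  rwa [d2inv_left M h, d2inv_left M h] at this

end D2

/-- Local diffeomorphism lemma from the inverse function theorem. -/
lemma local_diffeo (f : ℝ × ℝ → ℝ × ℝ) (s : Set (ℝ × ℝ)) (hs : IsOpen s)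
    (hf : ContDiffOn ℝ (⊤ : ℕ∞) f s) (a : ℝ × ℝ) (ha : a ∈ s)
    (hinv : d2 (fderiv ℝ f a) ≠ 0) :
    ∃ (V W : Set (ℝ × ℝ)) (finv : ℝ × ℝ → ℝ × ℝ),
      IsOpen V ∧ IsOpen W ∧ a ∈ V ∧ V ⊆ s ∧ f '' V = W ∧
      (∀ q ∈ V, d2 (fderiv ℝ f q) ≠ 0) ∧
      ContDiffOn ℝ (⊤ : ℕ∞) finv W ∧
      (∀ q ∈ V, finv (f q) = q) ∧ (∀ b ∈ W, f (finv b) = b) := by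
  have hfa : ContDiffAt ℝ (⊤ : ℕ∞) f a := hf.contDiffAt (hs.mem_nhds ha)
  have hda : DifferentiableAt ℝ f a := hfa.differentiableAt (by simp)
  have hFa : HasFDerivAt f ((d2equiv _ hinv : ℝ × ℝ →L[ℝ] ℝ × ℝ)) a := by
    rw [d2equiv_coe]; exact hda.hasFDerivAt
  let PH := hfa.toOpenPartialHomeomorph f hFa (by simp)
  have hPH_coe : (PH : ℝ × ℝ → ℝ × ℝ) = f := rfl
  have haPH : a ∈ PH.source := hfa.mem_toOpenPartialHomeomorph_source hFa (by simp)
  -- continuity of the determinant of the derivative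
  have hcd : ContinuousOn (fun q => d2 (fderiv ℝ f q)) s :=
    continuous_d2.comp_continuousOn (hf.continuousOn_fderiv_of_isOpen hs (by simp))
  have hU : IsOpen (s ∩ (fun q => d2 (fderiv ℝ f q)) ⁻¹' {(0 : ℝ)}ᶜ) :=
    hcd.isOpen_inter_preimage hs isOpen_compl_singleton
  set V : Set (ℝ × ℝ) := PH.source ∩ (s ∩ (fun q => d2 (fderiv ℝ f q)) ⁻¹' {(0 : ℝ)}ᶜ) with hV
  have hVopen : IsOpen V := PH.open_source.inter hU
  have hVsub : V ⊆ PH.source := Set.inter_subset_left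
  have haV : a ∈ V := ⟨haPH, ha, by simpa using hinv⟩
  have hVs : V ⊆ s := fun q hq => hq.2.1
  have hVd2 : ∀ q ∈ V, d2 (fderiv ℝ f q) ≠ 0 := fun q hq => by
    have := hq.2.2; simpa using this
  refine ⟨V, PH '' V, PH.symm, hVopen, PH.isOpen_image_of_subset_source hVopen hVsub,
    haV, hVs, rfl, hVd2, ?_, ?_, ?_⟩
  · -- smoothness of the inverse on W
    intro b hb
    obtain ⟨q, hqV, rfl⟩ := hb
    have hqsymm : PH.symm (PH q) = q := PH.left_inv (hVsub hqV)
    have hbt : PH q ∈ PH.target := PH.map_source (hVsub hqV)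
    have hcq : ContDiffAt ℝ (⊤ : ℕ∞) f q := hf.contDiffAt (hs.mem_nhds (hVs hqV))
    have hdq : DifferentiableAt ℝ f q := hcq.differentiableAt (by simp)
    have hFq : HasFDerivAt f ((d2equiv _ (hVd2 q hqV) : ℝ × ℝ →L[ℝ] ℝ × ℝ)) q := by
      rw [d2equiv_coe]; exact hdq.hasFDerivAt
    have := PH.contDiffAt_symm hbt (by rw [hqsymm]; exact hFq) (by rw [hqsymm, hPH_coe]; exact hcq)
    exact this.contDiffWithinAt
  · intro q hq
    exact PH.left_inv (hVsub hq)
  · rintro b ⟨q, hqV, rfl⟩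
    exact PH.right_inv (PH.map_source (hVsub hqV))

lemma covector_apply (L : ℝ × ℝ →L[ℝ] ℝ) (v : ℝ × ℝ) :
    L v = v.1 * L (1, 0) + v.2 * L (0, 1) := by
  have hv : v = v.1 • ((1 : ℝ), (0 : ℝ)) + v.2 • ((0 : ℝ), (1 : ℝ)) := by simp [Prod.ext_iff]
  conv_lhs => rw [hv]
  rw [map_add, map_smul, map_smul]; simp

lemma det_ne_zero_of_covector (L : ℝ × ℝ →L[ℝ] ℝ) (a b : ℝ × ℝ)
    (ha : L a ≠ 0) (hb : L b = 0) (hbne : b ≠ 0) : a.1 * b.2 - a.2 * b.1 ≠ 0 := by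
  intro h
  have hLa := covector_apply L a
  have hLb := covector_apply L b
  have h1 : b.1 * L a = 0 := by
    rw [hLa]; linear_combination (-L ((0:ℝ),(1:ℝ))) * h - a.1 * hLb + a.1 * hb
  have h2 : b.2 * L a = 0 := by
    rw [hLa]; linear_combination L ((1:ℝ),(0:ℝ)) * h - a.2 * hLb + a.2 * hb
  have hb1 : b.1 = 0 := by
    rcases mul_eq_zero.1 h1 with h | h
    · exact h
    · exact absurd h ha
  have hb2 : b.2 = 0 := by
    rcases mul_eq_zero.1 h2 with h | h
    · exact h
    · exact absurd h ha
  exact hbne (Prod.ext hb1 hb2)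

lemma const_on_of_deriv_zero {E : Type*} [NormedAddCommGroup E] [NormedSpace ℝ E]
    {s : Set ℝ} (hs : Convex ℝ s) {f : ℝ → E} (hf : ∀ t ∈ s, HasDerivAt f 0 t)
    {a b : ℝ} (ha : a ∈ s) (hb : b ∈ s) : f a = f b := by
  have hzero : (ContinuousLinearMap.smulRight (1 : ℝ →L[ℝ] ℝ) (0 : E)) = 0 := by
    ext v; simp
  have key := hs.norm_image_sub_le_of_norm_hasFDerivWithin_le
    (f' := fun _ => (0 : ℝ →L[ℝ] E)) (C := 0)
    (fun t ht => by
      have := (hf t ht).hasFDerivAt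
      rw [ContinuousLinearMap.toSpanSingleton_zero] at this
      exact this.hasFDerivWithinAt)
    (fun t _ => by simp) hb ha
  have : ‖f a - f b‖ ≤ 0 := by simpa using key
  have := le_antisymm this (norm_nonneg _)
  rwa [norm_eq_zero, sub_eq_zero] at this

lemma gronwall_zero {E : Type*} [NormedAddCommGroup E] [NormedSpace ℝ E]
    (f : ℝ → E) (f' : ℝ → E) (K b : ℝ)
    (hd : ∀ t ∈ Set.Icc (0:ℝ) b, HasDerivAt f (f' t) t)
    (bound : ∀ t ∈ Set.Icc (0:ℝ) b, ‖f' t‖ ≤ K * ‖f t‖)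
    (h0 : f 0 = 0) : ∀ t ∈ Set.Icc (0:ℝ) b, f t = 0 := by
  intro t ht
  have key := norm_le_gronwallBound_of_norm_deriv_right_le (δ := 0) (K := K) (ε := 0)
    (a := 0) (b := b) (f := f) (f' := f')
    (fun τ hτ => ((hd τ hτ).continuousAt).continuousWithinAt)
    (fun τ hτ => (hd τ (Set.Ico_subset_Icc_self hτ)).hasDerivWithinAt)
    (by simp [h0])
    (fun τ hτ => by simpa using bound τ (Set.Ico_subset_Icc_self hτ))
  have := key t ht
  rw [gronwallBound_ε0, zero_mul] at this
  exact norm_le_zero_iff.1 this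

set_option maxHeartbeats 1000000 in
/-- Around every point of a constant angle spacelike surface there are adapted coordinates
in which the first fundamental form is `du² + β² dv²`, i.e. after composing with a local
diffeomorphism `φ`, the reparametrized surface `y = x ∘ φ` satisfies `E = ⟨y_u, y_u⟩ = 1`
and `F = ⟨y_u, y_v⟩ = 0`. -/
theorem constant_angle_adapted_coordinates
    (Ω : Set (ℝ × ℝ)) (hΩ : IsOpen Ω)
    (x ξ : ℝ × ℝ → Fin 3 → ℝ)
    (hx : ContDiffOn ℝ (⊤ : ℕ∞) x Ω) (hξ : ContDiffOn ℝ (⊤ : ℕ∞) ξ Ω)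
    (himm : ∀ p ∈ Ω, Function.Injective (fderiv ℝ x p))
    (hunit : ∀ p ∈ Ω, ml (ξ p) (ξ p) = -1)
    (hperp : ∀ p ∈ Ω, ∀ w : ℝ × ℝ, ml (ξ p) (fderiv ℝ x p w) = 0)
    (U : Fin 3 → ℝ) (hU : ml U U = -1)
    (θ : ℝ) (hθ0 : 0 ≤ θ) (hθ : θ ≠ 0)
    (hangle : ∀ p ∈ Ω, ml (ξ p) U = -Real.cosh θ) :
    ∀ p ∈ Ω, ∃ (V W : Set (ℝ × ℝ)) (φ φinv : ℝ × ℝ → ℝ × ℝ),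
      IsOpen V ∧ IsOpen W ∧ W ⊆ Ω ∧ p ∈ W ∧
      ContDiffOn ℝ (⊤ : ℕ∞) φ V ∧ ContDiffOn ℝ (⊤ : ℕ∞) φinv W ∧
      φ '' V = W ∧ (∀ q ∈ V, φinv (φ q) = q) ∧ (∀ q ∈ W, φ (φinv q) = q) ∧
      (∀ q ∈ V,
        ml (fderiv ℝ (x ∘ φ) q (1, 0)) (fderiv ℝ (x ∘ φ) q (1, 0)) = 1 ∧
        ml (fderiv ℝ (x ∘ φ) q (1, 0)) (fderiv ℝ (x ∘ φ) q (0, 1)) = 0) := by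
  intro p hp
  have hθpos : 0 < θ := lt_of_le_of_ne hθ0 (Ne.symm hθ)
  set co := Real.cosh θ with hco
  set sθ := Real.sinh θ with hsθdef
  have hsθ : 0 < sθ := Real.sinh_pos_iff.2 hθpos
  have hpyth : co ^ 2 - sθ ^ 2 = 1 := Real.cosh_sq_sub_sinh_sq θ
  set e1 : ℝ × ℝ → Fin 3 → ℝ := fun q => sθ⁻¹ • (U - co • ξ q) with he1def
  -- differentiability plumbing
  have hxD : ∀ q ∈ Ω, HasFDerivAt x (fderiv ℝ x q) q := fun q hq =>
    ((hx.contDiffAt (hΩ.mem_nhds hq)).differentiableAt (by simp)).hasFDerivAt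
  have hξD : ∀ q ∈ Ω, HasFDerivAt ξ (fderiv ℝ ξ q) q := fun q hq =>
    ((hξ.contDiffAt (hΩ.mem_nhds hq)).differentiableAt (by simp)).hasFDerivAt
  have he1smooth : ContDiffOn ℝ (⊤ : ℕ∞) e1 Ω :=
    (contDiffOn_const.sub (hξ.const_smul co)).const_smul sθ⁻¹
  have he1D : ∀ q ∈ Ω, HasFDerivAt e1 (sθ⁻¹ • -(co • fderiv ℝ ξ q)) q := fun q hq =>
    (((hξD q hq).const_smul co).const_sub U).const_smul sθ⁻¹
  have he1fderiv : ∀ q ∈ Ω, fderiv ℝ e1 q = sθ⁻¹ • -(co • fderiv ℝ ξ q) := fun q hq =>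
    (he1D q hq).fderiv
  -- pointwise algebra
  have hml_e1 : ∀ q ∈ Ω, ml (e1 q) (e1 q) = 1 := by
    intro q hq
    have key : ml (U - co • ξ q) (U - co • ξ q) = sθ ^ 2 := by
      have h1 := hunit q hq
      have h2 := hangle q hq
      have hU' := hU
      simp only [ml, Pi.sub_apply, Pi.smul_apply, smul_eq_mul] at h1 h2 hU' ⊢
      linear_combination hU' - 2*co*h2 + co^2*h1 + hpyth
    have expand : ml (e1 q) (e1 q)
        = sθ⁻¹ * (sθ⁻¹ * ml (U - co • ξ q) (U - co • ξ q)) := by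
      show ml (sθ⁻¹ • (U - co • ξ q)) (sθ⁻¹ • (U - co • ξ q)) = _
      rw [ml_smul, ml_comm, ml_smul, ml_comm]
    rw [expand, key]
    field_simp
  have hml_e1U : ∀ q ∈ Ω, ml (e1 q) U = sθ := by
    intro q hq
    have h2 : ml U (ξ q) = -co := by rw [ml_comm]; exact hangle q hq
    have expand : ml (e1 q) U = sθ⁻¹ * (ml U U - co * ml U (ξ q)) := by
      show ml (sθ⁻¹ • (U - co • ξ q)) U = _
      rw [ml_comm, ml_smul, ml_sub, ml_smul]
    rw [expand, hU, h2]
    have hsq : (-1 - co * -co : ℝ) = sθ ^ 2 := by linear_combination hpyth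
    rw [hsq, pow_two, ← mul_assoc, inv_mul_cancel₀ hsθ.ne', one_mul]
  -- derivatives of the constraints
  have hlinD : ∀ (q w : ℝ × ℝ) (t₀ : ℝ), HasDerivAt (fun t : ℝ => q + t • w) w t₀ := by
    intro q w t₀
    simpa using ((hasDerivAt_id t₀).smul_const w).const_add q
  have hlinmem : ∀ q ∈ Ω, ∀ w : ℝ × ℝ, ∀ᶠ t : ℝ in nhds 0, q + t • w ∈ Ω := by
    intro q hq w
    have hcont : Continuous fun t : ℝ => q + t • w := continuous_const.add (continuous_id.smul continuous_const)
    exact hcont.continuousAt.eventually_mem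
      (hΩ.mem_nhds (show q + (0:ℝ) • w ∈ Ω by simpa using hq))
  have hηD : ∀ q ∈ Ω, ∀ w : ℝ × ℝ,
      HasDerivAt (fun t : ℝ => ξ (q + t • w)) (fderiv ℝ ξ q w) 0 := by
    intro q hq w
    have h0 : q + (0:ℝ) • w = q := by simp
    have hf : HasFDerivAt ξ (fderiv ℝ ξ q) (q + (0:ℝ) • w) := by rw [h0]; exact hξD q hq
    exact hf.comp_hasDerivAt 0 (hlinD q w 0)
  have hDξξ : ∀ q ∈ Ω, ∀ w, ml (fderiv ℝ ξ q w) (ξ q) = 0 := by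
    intro q hq w
    have h0 : q + (0:ℝ) • w = q := by simp
    have hd := hasDerivAt_ml (hηD q hq w) (hηD q hq w)
    rw [h0] at hd
    have hconst : (fun t : ℝ => ml (ξ (q + t • w)) (ξ (q + t • w)))
        =ᶠ[nhds 0] fun _ => (-1:ℝ) := by
      filter_upwards [hlinmem q hq w] with t ht using hunit _ ht
    have huniq := (hd.congr_of_eventuallyEq hconst.symm).unique (hasDerivAt_const 0 (-1))
    have hcm := ml_comm (fderiv ℝ ξ q w) (ξ q)
    linarith [huniq]
  have hDξU : ∀ q ∈ Ω, ∀ w, ml (fderiv ℝ ξ q w) U = 0 := by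
    intro q hq w
    have h0 : q + (0:ℝ) • w = q := by simp
    have hd := hasDerivAt_ml (hηD q hq w) (hasDerivAt_const 0 U)
    rw [h0] at hd
    have hconst : (fun t : ℝ => ml (ξ (q + t • w)) U) =ᶠ[nhds 0] fun _ => -co := by
      filter_upwards [hlinmem q hq w] with t ht using hangle _ ht
    have huniq := (hd.congr_of_eventuallyEq hconst.symm).unique (hasDerivAt_const 0 (-co))
    have hz := ml_zero (ξ q)
    linarith [huniq]
  have hTan : ∀ q ∈ Ω, ∃ w, fderiv ℝ x q w = e1 q ∧ fderiv ℝ ξ q w = 0 := by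
    intro q hq
    -- second derivative of x at q
    have hcx : ContDiffAt ℝ (⊤ : ℕ∞) x q := hx.contDiffAt (hΩ.mem_nhds hq)
    have hfd : ContDiffAt ℝ (⊤ : ℕ∞) (fderiv ℝ x) q := hcx.fderiv_right (by simp)
    have hHD : HasFDerivAt (fderiv ℝ x) (fderiv ℝ (fderiv ℝ x) q) q :=
      (hfd.differentiableAt (by simp)).hasFDerivAt
    have hev : ∀ᶠ y in nhds q, HasFDerivAt x (fderiv ℝ x y) y := by
      filter_upwards [hΩ.mem_nhds hq] with y hy using hxD y hy
    have hsymm : ∀ v w : ℝ × ℝ,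
        fderiv ℝ (fderiv ℝ x) q v w = fderiv ℝ (fderiv ℝ x) q w v := fun v w =>
      second_derivative_symmetric_of_eventually hev hHD v w
    have hmix : ∀ w w' : ℝ × ℝ, ml (fderiv ℝ ξ q w) (fderiv ℝ x q w') +
        ml (ξ q) (fderiv ℝ (fderiv ℝ x) q w w') = 0 := by
      intro w w'
      have h0 : q + (0:ℝ) • w = q := by simp
      have hFw' : HasDerivAt (fun t : ℝ => fderiv ℝ x (q + t • w) w')
          (fderiv ℝ (fderiv ℝ x) q w w') 0 := by
        have happ : HasFDerivAt (fun q' => fderiv ℝ x q' w')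
            (((ContinuousLinearMap.apply ℝ (Fin 3 → ℝ) w')).comp
              (fderiv ℝ (fderiv ℝ x) q)) q :=
          (ContinuousLinearMap.apply ℝ (Fin 3 → ℝ) w').hasFDerivAt.comp q hHD
        have happ' : HasFDerivAt (fun q' => fderiv ℝ x q' w')
            ((ContinuousLinearMap.apply ℝ (Fin 3 → ℝ) w').comp
              (fderiv ℝ (fderiv ℝ x) q)) (q + (0:ℝ) • w) := by rw [h0]; exact happ
        exact happ'.comp_hasDerivAt 0 (hlinD q w 0)
      have hd := hasDerivAt_ml (hηD q hq w) hFw'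
      rw [h0] at hd
      have hconst : (fun t : ℝ => ml (ξ (q + t • w)) (fderiv ℝ x (q + t • w) w'))
          =ᶠ[nhds 0] fun _ => (0:ℝ) := by
        filter_upwards [hlinmem q hq w] with t ht using hperp _ ht w'
      exact (hd.congr_of_eventuallyEq hconst.symm).unique (hasDerivAt_const 0 0) |>.symm ▸
        ((hd.congr_of_eventuallyEq hconst.symm).unique (hasDerivAt_const 0 0))
    obtain ⟨hpart1, hpart2⟩ := ml_basis (ξ q) (hunit q hq) (fderiv ℝ x q) (himm q hq)
      (fun w => hperp q hq w)
    have hml_e1ξ : ml (e1 q) (ξ q) = 0 := by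
      show ml (sθ⁻¹ • (U - co • ξ q)) (ξ q) = 0
      rw [ml_comm, ml_smul, ml_sub, ml_smul, hunit q hq]
      have h2 : ml (ξ q) U = -co := hangle q hq
      rw [h2]; ring
    obtain ⟨w, hw⟩ := hpart1 (e1 q) hml_e1ξ
    refine ⟨w, hw, ?_⟩
    apply hpart2
    · exact hDξξ q hq w
    · intro w'
      have h1 := hmix w w'
      have h2 := hmix w' w
      rw [hw] at h2
      have h3 : ml (fderiv ℝ ξ q w') (e1 q) = 0 := by
        show ml (fderiv ℝ ξ q w') (sθ⁻¹ • (U - co • ξ q)) = 0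
        rw [ml_smul, ml_sub, ml_smul, hDξU q hq w', hDξξ q hq w']
        ring
      have h4 : ml (ξ q) (fderiv ℝ (fderiv ℝ x) q w w')
          = ml (ξ q) (fderiv ℝ (fderiv ℝ x) q w' w) := by
        rw [hsymm w w']
      linarith
  -- the chart projection
  obtain ⟨π, hπd2⟩ : ∃ π : (Fin 3 → ℝ) →L[ℝ] ℝ × ℝ, d2 (π.comp (fderiv ℝ x p)) ≠ 0 := by
    classical
    set X1 := fderiv ℝ x p ((1:ℝ), (0:ℝ)) with hX1
    set X2 := fderiv ℝ x p ((0:ℝ), (1:ℝ)) with hX2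
    have hzero3 : ∀ v : Fin 3 → ℝ, v 0 * v 0 + v 1 * v 1 + v 2 * v 2 = 0 → v = 0 := by
      intro v h
      have h0 : v 0 * v 0 = 0 := by nlinarith [mul_self_nonneg (v 0), mul_self_nonneg (v 1), mul_self_nonneg (v 2)]
      have h1 : v 1 * v 1 = 0 := by nlinarith [mul_self_nonneg (v 0), mul_self_nonneg (v 1), mul_self_nonneg (v 2)]
      have h2 : v 2 * v 2 = 0 := by nlinarith [mul_self_nonneg (v 0), mul_self_nonneg (v 1), mul_self_nonneg (v 2)]
      funext i
      fin_cases i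
      · exact mul_self_eq_zero.1 h0
      · exact mul_self_eq_zero.1 h1
      · exact mul_self_eq_zero.1 h2
    have hinj := himm p hp
    have hker : ∀ v : ℝ × ℝ, fderiv ℝ x p v = 0 → v = 0 := by
      intro v hv
      have : fderiv ℝ x p v = fderiv ℝ x p 0 := by rw [hv, map_zero]
      exact hinj this
    set P1 : (Fin 3 → ℝ) →L[ℝ] ℝ :=
      X1 0 • ContinuousLinearMap.proj (R := ℝ) (φ := fun _ : Fin 3 => ℝ) 0 +
      X1 1 • ContinuousLinearMap.proj (R := ℝ) (φ := fun _ : Fin 3 => ℝ) 1 +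
      X1 2 • ContinuousLinearMap.proj (R := ℝ) (φ := fun _ : Fin 3 => ℝ) 2 with hP1
    set P2 : (Fin 3 → ℝ) →L[ℝ] ℝ :=
      X2 0 • ContinuousLinearMap.proj (R := ℝ) (φ := fun _ : Fin 3 => ℝ) 0 +
      X2 1 • ContinuousLinearMap.proj (R := ℝ) (φ := fun _ : Fin 3 => ℝ) 1 +
      X2 2 • ContinuousLinearMap.proj (R := ℝ) (φ := fun _ : Fin 3 => ℝ) 2 with hP2
    have hP1a : ∀ v : Fin 3 → ℝ, P1 v = X1 0 * v 0 + X1 1 * v 1 + X1 2 * v 2 := by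
      intro v; simp [hP1]
    have hP2a : ∀ v : Fin 3 → ℝ, P2 v = X2 0 * v 0 + X2 1 * v 1 + X2 2 * v 2 := by
      intro v; simp [hP2]
    refine ⟨P1.prod P2, ?_⟩
    have hval : d2 ((P1.prod P2).comp (fderiv ℝ x p)) =
        (X1 0 * X1 0 + X1 1 * X1 1 + X1 2 * X1 2) * (X2 0 * X2 0 + X2 1 * X2 1 + X2 2 * X2 2)
        - (X1 0 * X2 0 + X1 1 * X2 1 + X1 2 * X2 2) * (X2 0 * X1 0 + X2 1 * X1 1 + X2 2 * X1 2) := by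
      simp only [d2, ContinuousLinearMap.comp_apply, ContinuousLinearMap.prod_apply,
        Prod.fst, Prod.snd, ← hX1, ← hX2, hP1a, hP2a]
      ring
    rw [hval]
    intro hdet
    -- X1 ≠ 0
    have hX1ne : X1 ≠ 0 := by
      intro h
      have : ((1:ℝ), (0:ℝ)) = 0 := hker _ h
      simpa [Prod.ext_iff] using this
    have hd11ne : X1 0 * X1 0 + X1 1 * X1 1 + X1 2 * X1 2 ≠ 0 := fun h => hX1ne (hzero3 X1 h)
    set d12 := X1 0 * X2 0 + X1 1 * X2 1 + X1 2 * X2 2 with hd12def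
    set d11 := X1 0 * X1 0 + X1 1 * X1 1 + X1 2 * X1 2 with hd11def
    -- the vector v = d12 • X1 - d11 • X2
    have hvim : fderiv ℝ x p (d12, -d11) = d12 • X1 + (-d11) • X2 := by
      have := clm_apply_eq' (fderiv ℝ x p) (d12, -d11)
      simpa using this
    have hdot : ∀ i : Fin 3, (d12 • X1 + (-d11) • X2) i = d12 * X1 i - d11 * X2 i := by
      intro i; simp [Pi.smul_apply]; ring
    have hvv : (d12 • X1 + (-d11) • X2) 0 * (d12 • X1 + (-d11) • X2) 0 +
        (d12 • X1 + (-d11) • X2) 1 * (d12 • X1 + (-d11) • X2) 1 +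
        (d12 • X1 + (-d11) • X2) 2 * (d12 • X1 + (-d11) • X2) 2 = 0 := by
      rw [hdot 0, hdot 1, hdot 2, hd12def, hd11def]
      rw [hd12def, hd11def] at hdet
      linear_combination (X1 0 * X1 0 + X1 1 * X1 1 + X1 2 * X1 2) * hdet
    have hv0 := hzero3 _ hvv
    rw [hv0] at hvim
    have := hker _ hvim
    rw [Prod.ext_iff] at this
    have h2 := this.2
    simp at h2
    exact hd11ne (by rw [hd11def]; linarith)
  set ψ : ℝ × ℝ → ℝ × ℝ := fun q => π (x q) with hψdef
  have hψsmooth : ContDiffOn ℝ (⊤ : ℕ∞) ψ Ω := π.contDiff.comp_contDiffOn hx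
  have hψD : ∀ q ∈ Ω, HasFDerivAt ψ (π.comp (fderiv ℝ x q)) q := fun q hq =>
    (π.hasFDerivAt).comp q (hxD q hq)
  have hψfderiv : ∀ q ∈ Ω, fderiv ℝ ψ q = π.comp (fderiv ℝ x q) := fun q hq =>
    (hψD q hq).fderiv
  obtain ⟨Vψ, Wψ, ψi, hVψo, hWψo, hpVψ, hVψΩ, himgψ, hd2ψ, hψis, hliψ, hriψ⟩ :=
    local_diffeo ψ Ω hΩ hψsmooth p hp (by rw [hψfderiv p hp]; exact hπd2)
  have hWtoV : ∀ b ∈ Wψ, ψi b ∈ Vψ := by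
    intro b hb
    rw [← himgψ] at hb
    obtain ⟨q, hq, rfl⟩ := hb
    rw [hliψ q hq]; exact hq
  have hψpW : ψ p ∈ Wψ := by rw [← himgψ]; exact Set.mem_image_of_mem ψ hpVψ
  have hψiD : ∀ b ∈ Wψ, HasFDerivAt ψi (fderiv ℝ ψi b) b := fun b hb =>
    ((hψis.contDiffAt (hWψo.mem_nhds hb)).differentiableAt (by simp)).hasFDerivAt
  have hLRψ : ∀ q ∈ Vψ, ∀ v, fderiv ℝ ψi (ψ q) (fderiv ℝ ψ q v) = v := by
    intro q hq v
    have hqΩ : q ∈ Ω := hVψΩ hq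
    have hψqW : ψ q ∈ Wψ := by rw [← himgψ]; exact Set.mem_image_of_mem ψ hq
    have h1 : HasFDerivAt (fun q' => ψi (ψ q'))
        ((fderiv ℝ ψi (ψ q)).comp (π.comp (fderiv ℝ x q))) q :=
      (hψiD _ hψqW).comp q (hψD q hqΩ)
    have h2 : (fun q' => ψi (ψ q')) =ᶠ[nhds q] id := by
      filter_upwards [hVψo.mem_nhds hq] with y hy using hliψ y hy
    have h3 := (h1.congr_of_eventuallyEq h2.symm).unique (hasFDerivAt_id q)
    rw [hψfderiv q hqΩ]
    calc fderiv ℝ ψi (ψ q) ((π.comp (fderiv ℝ x q)) v)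
        = ((fderiv ℝ ψi (ψ q)).comp (π.comp (fderiv ℝ x q))) v := rfl
      _ = (ContinuousLinearMap.id ℝ (ℝ × ℝ)) v := by rw [h3]
      _ = v := rfl
  set Z : ℝ × ℝ → ℝ × ℝ := fun b => π (e1 (ψi b)) with hZdef
  have hmapsψi : Set.MapsTo ψi Wψ Ω := fun b hb => hVψΩ (hWtoV b hb)
  have hZsmooth : ContDiffOn ℝ (⊤ : ℕ∞) Z Wψ :=
    π.contDiff.comp_contDiffOn (he1smooth.comp hψis hmapsψi)
  have hZw : ∀ b ∈ Wψ, fderiv ℝ x (ψi b) (fderiv ℝ ψi b (Z b)) = e1 (ψi b) ∧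
      fderiv ℝ ξ (ψi b) (fderiv ℝ ψi b (Z b)) = 0 := by
    intro b hb
    have hq := hWtoV b hb
    have hqΩ : ψi b ∈ Ω := hVψΩ hq
    obtain ⟨w, hw1, hw2⟩ := hTan (ψi b) hqΩ
    have hZb : Z b = fderiv ℝ ψ (ψi b) w := by
      show π (e1 (ψi b)) = _
      rw [← hw1, hψfderiv _ hqΩ]
      rfl
    have hkey : fderiv ℝ ψi b (Z b) = w := by
      have h := hLRψ (ψi b) hq w
      rw [hriψ b hb] at h
      rw [hZb]
      rw [hψfderiv _ hqΩ] at h ⊢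
      exact h
    rw [hkey]
    exact ⟨hw1, hw2⟩
  have hKDZ : ∀ b ∈ Wψ, fderiv ℝ Z b (Z b) = 0 := by
    intro b hb
    have hqΩ : ψi b ∈ Ω := hVψΩ (hWtoV b hb)
    have hZD : HasFDerivAt Z
        (π.comp ((sθ⁻¹ • -(co • fderiv ℝ ξ (ψi b))).comp (fderiv ℝ ψi b))) b :=
      π.hasFDerivAt.comp b ((he1D _ hqΩ).comp b (hψiD b hb))
    rw [hZD.fderiv]
    have h2 := (hZw b hb).2
    simp only [ContinuousLinearMap.comp_apply, ContinuousLinearMap.coe_smul',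
      Pi.smul_apply, ContinuousLinearMap.neg_apply, h2]
    simp
  -- radius and bound
  obtain ⟨r, hrpos, hball⟩ : ∃ r > 0, Metric.closedBall (ψ p) r ⊆ Wψ := by
    obtain ⟨ε, hε, hεsub⟩ := Metric.isOpen_iff.1 hWψo (ψ p) hψpW
    exact ⟨ε/2, by positivity,
      (Metric.closedBall_subset_ball (by linarith)).trans hεsub⟩
  obtain ⟨CZ, hCZ0, hCZ⟩ : ∃ C : ℝ, 0 ≤ C ∧
      ∀ b ∈ Metric.closedBall (ψ p) r, ‖fderiv ℝ Z b‖ ≤ C := by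
    have hZc : ContinuousOn (fderiv ℝ Z) Wψ :=
      hZsmooth.continuousOn_fderiv_of_isOpen hWψo (by simp)
    obtain ⟨C, hC⟩ := (isCompact_closedBall (ψ p) r).exists_bound_of_continuousOn
      (hZc.mono hball)
    exact ⟨max C 0, le_max_right _ _, fun b hb => (hC b hb).trans (le_max_left _ _)⟩
  have hZconst : ∀ b ∈ Metric.ball (ψ p) (r/2), ∀ s : ℝ, |s| * ‖Z b‖ ≤ r/2 →
      Z (b + s • Z b) = Z b := by
    intro b hb s hs
    have main : ∀ ε : ℝ, |ε| = 1 → ∀ σ₀ ∈ Set.Icc (0:ℝ) |s|,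
        Z (b + σ₀ • (ε • Z b)) = Z b := by
      intro ε hε σ₀ hσ₀
      have hmem : ∀ σ ∈ Set.Icc (0:ℝ) |s|,
          b + σ • (ε • Z b) ∈ Metric.closedBall (ψ p) r := by
        intro σ hσ
        rw [Metric.mem_closedBall, dist_eq_norm]
        have hre : b + σ • (ε • Z b) - ψ p = (b - ψ p) + σ • (ε • Z b) := by abel
        rw [hre]
        have hn1 : ‖b - ψ p‖ ≤ r/2 := by
          rw [← dist_eq_norm]; exact le_of_lt hb
        have hn2 : ‖σ • (ε • Z b)‖ ≤ r/2 := by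
          rw [norm_smul, norm_smul, Real.norm_eq_abs, Real.norm_eq_abs, hε, one_mul]
          calc |σ| * ‖Z b‖ ≤ |s| * ‖Z b‖ := by
                apply mul_le_mul_of_nonneg_right _ (norm_nonneg _)
                rw [abs_of_nonneg hσ.1]; exact hσ.2
            _ ≤ r/2 := hs
        calc ‖(b - ψ p) + σ • (ε • Z b)‖ ≤ ‖b - ψ p‖ + ‖σ • (ε • Z b)‖ := norm_add_le _ _
          _ ≤ r/2 + r/2 := add_le_add hn1 hn2
          _ = r := by ring
      set g : ℝ → ℝ × ℝ := fun σ => Z (b + σ • (ε • Z b)) - Z b with hg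
      have hgd : ∀ σ ∈ Set.Icc (0:ℝ) |s|, HasDerivAt g
          (fderiv ℝ Z (b + σ • (ε • Z b)) (ε • Z b)) σ := by
        intro σ hσ
        have hbW : b + σ • (ε • Z b) ∈ Wψ := hball (hmem σ hσ)
        have hZD : HasFDerivAt Z (fderiv ℝ Z (b + σ • (ε • Z b))) (b + σ • (ε • Z b)) :=
          ((hZsmooth.contDiffAt (hWψo.mem_nhds hbW)).differentiableAt (by simp)).hasFDerivAt
        exact (hZD.comp_hasDerivAt σ (hlinD b (ε • Z b) σ)).sub_const (Z b)
      have hbound : ∀ σ ∈ Set.Icc (0:ℝ) |s|,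
          ‖fderiv ℝ Z (b + σ • (ε • Z b)) (ε • Z b)‖ ≤ CZ * ‖g σ‖ := by
        intro σ hσ
        have hbW : b + σ • (ε • Z b) ∈ Wψ := hball (hmem σ hσ)
        have hkdz := hKDZ _ hbW
        have hZbrepr : Z b = Z (b + σ • (ε • Z b)) - g σ := by
          rw [hg]; simp
        have h1 : fderiv ℝ Z (b + σ • (ε • Z b)) (ε • Z b)
            = ε • (fderiv ℝ Z (b + σ • (ε • Z b)) (Z b)) := map_smul _ _ _
        have h2 : fderiv ℝ Z (b + σ • (ε • Z b)) (Z b)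
            = -(fderiv ℝ Z (b + σ • (ε • Z b)) (g σ)) :=
          calc fderiv ℝ Z (b + σ • (ε • Z b)) (Z b)
              = fderiv ℝ Z (b + σ • (ε • Z b)) (Z (b + σ • (ε • Z b)) - g σ) :=
                congrArg _ hZbrepr
            _ = -(fderiv ℝ Z (b + σ • (ε • Z b)) (g σ)) := by
                rw [map_sub, hkdz, zero_sub]
        rw [h1, h2, norm_smul, norm_neg, Real.norm_eq_abs, hε, one_mul]
        calc ‖fderiv ℝ Z (b + σ • (ε • Z b)) (g σ)‖
            ≤ ‖fderiv ℝ Z (b + σ • (ε • Z b))‖ * ‖g σ‖ :=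
              ContinuousLinearMap.le_opNorm _ _
          _ ≤ CZ * ‖g σ‖ :=
              mul_le_mul_of_nonneg_right (hCZ _ (hmem σ hσ)) (norm_nonneg _)
      have hg0 : g 0 = 0 := by simp [hg]
      have hzero := gronwall_zero g
        (fun σ => fderiv ℝ Z (b + σ • (ε • Z b)) (ε • Z b)) CZ |s| hgd hbound hg0 σ₀ hσ₀
      have h' : Z (b + σ₀ • (ε • Z b)) - Z b = 0 := hzero
      rw [sub_eq_zero] at h'
      exact h'
    rcases le_or_gt 0 s with h | h
    · have := main 1 (by norm_num) s ⟨h, by rw [abs_of_nonneg h]⟩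
      simpa using this
    · have := main (-1) (by norm_num) (-s) ⟨by linarith, by rw [abs_of_neg h]⟩
      have hsimp : (-s) • ((-1 : ℝ) • Z b) = s • Z b := by
        rw [smul_smul]; norm_num
      rw [hsimp] at this
      exact this
  have hxline : ∀ b ∈ Metric.ball (ψ p) (r/2), ∀ s : ℝ, |s| * ‖Z b‖ ≤ r/2 →
      (∀ s' : ℝ, |s'| ≤ |s| → e1 (ψi (b + s' • Z b)) = e1 (ψi b)) ∧
      x (ψi (b + s • Z b)) = x (ψi b) + s • e1 (ψi b) := by
    intro b hb s hs
    have hmemW : ∀ σ : ℝ, |σ| ≤ |s| → b + σ • Z b ∈ Wψ := by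
      intro σ hσ
      apply hball
      rw [Metric.mem_closedBall, dist_eq_norm]
      have hre : b + σ • Z b - ψ p = (b - ψ p) + σ • Z b := by abel
      rw [hre]
      have hn1 : ‖b - ψ p‖ ≤ r/2 := by rw [← dist_eq_norm]; exact le_of_lt hb
      have hn2 : ‖σ • Z b‖ ≤ r/2 := by
        rw [norm_smul, Real.norm_eq_abs]
        exact le_trans (mul_le_mul_of_nonneg_right hσ (norm_nonneg _)) hs
      calc ‖(b - ψ p) + σ • Z b‖ ≤ ‖b - ψ p‖ + ‖σ • Z b‖ := norm_add_le _ _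
        _ ≤ r/2 + r/2 := add_le_add hn1 hn2
        _ = r := by ring
    have hZc : ∀ σ : ℝ, |σ| ≤ |s| → Z (b + σ • Z b) = Z b := fun σ hσ =>
      hZconst b hb σ (le_trans (mul_le_mul_of_nonneg_right hσ (norm_nonneg _)) hs)
    have h0Icc : (0:ℝ) ∈ Set.Icc (-|s|) |s| := ⟨neg_nonpos.2 (abs_nonneg s), abs_nonneg s⟩
    have hconst_e1 : ∀ σ : ℝ, |σ| ≤ |s| → e1 (ψi (b + σ • Z b)) = e1 (ψi b) := by
      have hder : ∀ σ ∈ Set.Icc (-|s|) |s|,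
          HasDerivAt (fun τ => e1 (ψi (b + τ • Z b))) 0 σ := by
        intro σ hσ
        have hσabs : |σ| ≤ |s| := abs_le.2 ⟨hσ.1, hσ.2⟩
        have hbW := hmemW σ hσabs
        have hqΩ : ψi (b + σ • Z b) ∈ Ω := hVψΩ (hWtoV _ hbW)
        have hchain : HasDerivAt (fun τ => e1 (ψi (b + τ • Z b)))
            ((sθ⁻¹ • -(co • fderiv ℝ ξ (ψi (b + σ • Z b))))
              (fderiv ℝ ψi (b + σ • Z b) (Z b))) σ :=
          ((he1D _ hqΩ).comp _ (hψiD _ hbW)).comp_hasDerivAt (f := fun τ => b + τ • Z b) σ (hlinD b (Z b) σ)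
        have h1 := congrArg (fderiv ℝ ψi (b + σ • Z b)) (hZc σ hσabs).symm
        have hval : (sθ⁻¹ • -(co • fderiv ℝ ξ (ψi (b + σ • Z b))))
            (fderiv ℝ ψi (b + σ • Z b) (Z b)) = 0 := by
          rw [h1]
          simp only [ContinuousLinearMap.coe_smul', Pi.smul_apply,
            ContinuousLinearMap.neg_apply, (hZw _ hbW).2]
          simp
        rw [hval] at hchain
        exact hchain
      intro σ hσ
      have := const_on_of_deriv_zero (convex_Icc _ _) hder (abs_le.1 hσ) h0Icc
      simpa using this
    refine ⟨hconst_e1, ?_⟩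
    have hder : ∀ σ ∈ Set.Icc (-|s|) |s|,
        HasDerivAt (fun τ => x (ψi (b + τ • Z b)) - τ • e1 (ψi b)) 0 σ := by
      intro σ hσ
      have hσabs : |σ| ≤ |s| := abs_le.2 ⟨hσ.1, hσ.2⟩
      have hbW := hmemW σ hσabs
      have hqΩ : ψi (b + σ • Z b) ∈ Ω := hVψΩ (hWtoV _ hbW)
      have hchain : HasDerivAt (fun τ => x (ψi (b + τ • Z b)))
          (fderiv ℝ x (ψi (b + σ • Z b)) (fderiv ℝ ψi (b + σ • Z b) (Z b))) σ :=
        ((hxD _ hqΩ).comp _ (hψiD _ hbW)).comp_hasDerivAt (f := fun τ => b + τ • Z b) σ (hlinD b (Z b) σ)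
      have h1 := congrArg (fderiv ℝ ψi (b + σ • Z b)) (hZc σ hσabs).symm
      have hval : fderiv ℝ x (ψi (b + σ • Z b)) (fderiv ℝ ψi (b + σ • Z b) (Z b))
          = e1 (ψi b) := by
        rw [h1, (hZw _ hbW).1]
        exact hconst_e1 σ hσabs
      rw [hval] at hchain
      have hsm : HasDerivAt (fun τ : ℝ => τ • e1 (ψi b)) (e1 (ψi b)) σ := by
        simpa using (hasDerivAt_id σ).smul_const (e1 (ψi b))
      have := hchain.fun_sub hsm
      rw [sub_self] at this
      exact this
    have hsIcc : s ∈ Set.Icc (-|s|) |s| := ⟨neg_abs_le s, le_abs_self s⟩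
    have hkey := const_on_of_deriv_zero (convex_Icc _ _) hder hsIcc h0Icc
    have hρs : x (ψi (b + s • Z b)) - s • e1 (ψi b) = x (ψi b) := by
      simpa using hkey
    rw [← hρs]; abel
  -- the transversal curve
  obtain ⟨χ, hχsmooth, hχfst, hχd2⟩ : ∃ χ : ℝ × ℝ → ℝ × ℝ, ContDiffOn ℝ (⊤ : ℕ∞) χ Ω ∧
      (∀ q, (χ q).1 = ml (x q) U) ∧ d2 (fderiv ℝ χ p) ≠ 0 := by
    obtain ⟨w₁, hw1, hw2⟩ := hTan p hp
    set A1 := mlCLM U (fderiv ℝ x p ((1:ℝ), (0:ℝ))) with hA1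
    set B1 := mlCLM U (fderiv ℝ x p ((0:ℝ), (1:ℝ))) with hB1
    set ℓ : ℝ × ℝ →L[ℝ] ℝ := (-B1) • ContinuousLinearMap.fst ℝ ℝ ℝ +
      A1 • ContinuousLinearMap.snd ℝ ℝ ℝ with hℓ
    refine ⟨fun q => (mlCLM U (x q), ℓ q), ?_, fun q => by simp [mlCLM_apply], ?_⟩
    · exact ContDiffOn.prodMk ((mlCLM U).contDiff.comp_contDiffOn hx) ℓ.contDiff.contDiffOn
    · have hD : HasFDerivAt (fun q => (mlCLM U (x q), ℓ q))
          (((mlCLM U).comp (fderiv ℝ x p)).prod ℓ) p :=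
        ((mlCLM U).hasFDerivAt.comp p (hxD p hp)).prodMk ℓ.hasFDerivAt
      rw [hD.fderiv]
      have hval : d2 (((mlCLM U).comp (fderiv ℝ x p)).prod ℓ) = A1 * A1 + B1 * B1 := by
        simp only [d2, ContinuousLinearMap.prod_apply, ContinuousLinearMap.comp_apply,
          hℓ, ContinuousLinearMap.add_apply, ContinuousLinearMap.coe_smul', Pi.smul_apply,
          ContinuousLinearMap.coe_fst', ContinuousLinearMap.coe_snd', smul_eq_mul,
          ← hA1, ← hB1]
        ring
      rw [hval]
      have hlin : A1 * w₁.1 + B1 * w₁.2 = sθ := by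
        have hexp : mlCLM U (fderiv ℝ x p w₁) = A1 * w₁.1 + B1 * w₁.2 := by
          rw [clm_apply_eq' (fderiv ℝ x p) w₁, map_add, map_smul, map_smul]
          simp only [smul_eq_mul, ← hA1, ← hB1]
          ring
        have h2 : mlCLM U (fderiv ℝ x p w₁) = sθ := by
          rw [hw1, mlCLM_apply]; exact hml_e1U p hp
        linarith [hexp, h2]
      intro hcontra
      have hA1sq : A1 * A1 = 0 :=
        le_antisymm (by nlinarith [mul_self_nonneg B1]) (mul_self_nonneg A1)
      have hB1sq : B1 * B1 = 0 :=
        le_antisymm (by nlinarith [mul_self_nonneg A1]) (mul_self_nonneg B1)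
      have hA10 : A1 = 0 := mul_self_eq_zero.1 hA1sq
      have hB10 : B1 = 0 := mul_self_eq_zero.1 hB1sq
      rw [hA10, hB10] at hlin
      simp at hlin
      exact hsθ.ne' hlin.symm
  obtain ⟨Vχ, Wχ, χi, hVχo, hWχo, hpVχ, hVχΩ, himgχ, hd2χ, hχis, hliχ, hriχ⟩ :=
    local_diffeo χ Ω hΩ hχsmooth p hp hχd2
  have hWtoVχ : ∀ b ∈ Wχ, χi b ∈ Vχ := by
    intro b hb
    rw [← himgχ] at hb
    obtain ⟨q, hq, rfl⟩ := hb
    rw [hliχ q hq]; exact hq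
  have hχpW : χ p ∈ Wχ := by rw [← himgχ]; exact Set.mem_image_of_mem χ hpVχ
  set c : ℝ → ℝ × ℝ := fun t => χi (χ p + ((0 : ℝ), t)) with hcdef
  have hc0 : c 0 = p := by
    have : χ p + ((0:ℝ), (0:ℝ)) = χ p := by simp
    rw [hcdef]; simp only [this]; exact hliχ p hpVχ
  -- choice of δ
  obtain ⟨δ, hδpos, hδmem, hδbound⟩ : ∃ δ > 0, (∀ t : ℝ, |t| < δ →
      (χ p + ((0:ℝ), t) ∈ Wχ ∧ c t ∈ Vχ ∧ c t ∈ Vψ ∧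
        ψ (c t) ∈ Metric.ball (ψ p) (r/2) ∧ ‖Z (ψ (c t))‖ < ‖Z (ψ p)‖ + 1)) ∧
      δ * (‖Z (ψ p)‖ + 1) ≤ r/2 := by
    have hc0' : χ p + ((0:ℝ), (0:ℝ)) = χ p := by simp
    have hχicont : ContinuousAt χi (χ p) :=
      (hχis.contDiffAt (hWχo.mem_nhds hχpW)).continuousAt
    have hgc : Continuous fun t : ℝ => χ p + ((0:ℝ), t) :=
      continuous_const.add (continuous_const.prodMk continuous_id)
    have hccont : ContinuousAt c 0 := by
      apply ContinuousAt.comp (g := χi) (f := fun t : ℝ => χ p + ((0:ℝ), t)) (x := (0:ℝ))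
      · show ContinuousAt χi (χ p + ((0:ℝ), (0:ℝ)))
        rw [hc0']; exact hχicont
      · exact hgc.continuousAt
    have ev1 : ∀ᶠ t : ℝ in nhds 0, χ p + ((0:ℝ), t) ∈ Wχ :=
      hgc.continuousAt.eventually_mem (by simpa [hc0'] using hWχo.mem_nhds hχpW)
    have ev2 : ∀ᶠ t : ℝ in nhds 0, c t ∈ Vχ :=
      hccont.eventually_mem (by rw [hc0]; exact hVχo.mem_nhds hpVχ)
    have ev3 : ∀ᶠ t : ℝ in nhds 0, c t ∈ Vψ :=
      hccont.eventually_mem (by rw [hc0]; exact hVψo.mem_nhds hpVψ)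
    have hψccont : ContinuousAt (fun t => ψ (c t)) 0 := by
      apply ContinuousAt.comp (g := ψ) (f := c) (x := (0:ℝ))
      · rw [hc0]; exact (hψsmooth.contDiffAt (hΩ.mem_nhds hp)).continuousAt
      · exact hccont
    have ev4 : ∀ᶠ t : ℝ in nhds 0, ψ (c t) ∈ Metric.ball (ψ p) (r/2) := by
      apply hψccont.eventually_mem
      have : ψ (c 0) = ψ p := by rw [hc0]
      rw [this]
      exact Metric.ball_mem_nhds _ (by positivity)
    have hZccont : ContinuousAt (fun t => Z (ψ (c t))) 0 := by
      apply ContinuousAt.comp (g := Z) (f := fun t => ψ (c t)) (x := (0:ℝ))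
      · show ContinuousAt Z (ψ (c 0))
        rw [hc0]; exact (hZsmooth.contDiffAt (hWψo.mem_nhds hψpW)).continuousAt
      · exact hψccont
    have ev5 : ∀ᶠ t : ℝ in nhds 0, ‖Z (ψ (c t))‖ < ‖Z (ψ p)‖ + 1 := by
      have hn : ContinuousAt (fun t => ‖Z (ψ (c t))‖) 0 := hZccont.norm
      have hlt : ‖Z (ψ (c 0))‖ < ‖Z (ψ p)‖ + 1 := by rw [hc0]; linarith
      exact hn.eventually_lt_const hlt
    have hall := (((ev1.and ev2).and ev3).and ev4).and ev5
    rw [Metric.eventually_nhds_iff] at hall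
    obtain ⟨δ₁, hδ₁pos, hδ₁⟩ := hall
    have hMpos : (0:ℝ) < ‖Z (ψ p)‖ + 1 := by positivity
    refine ⟨min (δ₁/2) ((r/2)/(‖Z (ψ p)‖ + 1)), by positivity, ?_, ?_⟩
    · intro t ht
      have htδ₁ : dist t 0 < δ₁ := by
        rw [Real.dist_eq, sub_zero]
        calc |t| < min (δ₁/2) ((r/2)/(‖Z (ψ p)‖ + 1)) := ht
          _ ≤ δ₁/2 := min_le_left _ _
          _ < δ₁ := by linarith
      have hres := hδ₁ htδ₁
      exact ⟨hres.1.1.1.1, hres.1.1.1.2, hres.1.1.2, hres.1.2, hres.2⟩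
    · calc min (δ₁/2) ((r/2)/(‖Z (ψ p)‖ + 1)) * (‖Z (ψ p)‖ + 1)
          ≤ ((r/2)/(‖Z (ψ p)‖ + 1)) * (‖Z (ψ p)‖ + 1) :=
            mul_le_mul_of_nonneg_right (min_le_right _ _) (le_of_lt hMpos)
        _ = r/2 := div_mul_cancel₀ _ (ne_of_gt hMpos)
  set A : ℝ × ℝ → ℝ × ℝ := fun st => ψ (c st.2) + st.1 • Z (ψ (c st.2)) with hAdef
  set φ : ℝ × ℝ → ℝ × ℝ := fun st => ψi (A st) with hφdef
  set box : Set (ℝ × ℝ) := Set.Ioo (-δ) δ ×ˢ Set.Ioo (-δ) δ with hboxdef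
  have hboxo : IsOpen box := IsOpen.prod isOpen_Ioo isOpen_Ioo
  have hbox00 : ((0:ℝ), (0:ℝ)) ∈ box := by
    constructor <;> constructor <;> simp [hδpos] <;> linarith
  have hboxmem : ∀ st : ℝ × ℝ, st ∈ box → |st.1| < δ ∧ |st.2| < δ := by
    rintro ⟨s, t⟩ ⟨⟨h1, h2⟩, h3, h4⟩
    constructor <;> rw [abs_lt] <;> constructor <;> assumption
  have hsZbound : ∀ st : ℝ × ℝ, st ∈ box → |st.1| * ‖Z (ψ (c st.2))‖ ≤ r/2 := by
    intro st hst
    obtain ⟨h1, h2⟩ := hboxmem st hst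
    have h5 := (hδmem st.2 h2).2.2.2.2
    calc |st.1| * ‖Z (ψ (c st.2))‖ ≤ δ * (‖Z (ψ p)‖ + 1) :=
        mul_le_mul (le_of_lt h1) (le_of_lt h5) (norm_nonneg _) (le_of_lt hδpos)
      _ ≤ r/2 := hδbound
  have hA00 : A ((0:ℝ), (0:ℝ)) = ψ p := by
    rw [hAdef]; simp [hc0]
  have hAW : ∀ st ∈ box, A st ∈ Wψ := by
    intro st hst
    obtain ⟨h1, h2⟩ := hboxmem st hst
    have h4 := (hδmem st.2 h2).2.2.2.1
    apply hball
    rw [Metric.mem_closedBall, dist_eq_norm]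
    have hre : A st - ψ p = (ψ (c st.2) - ψ p) + st.1 • Z (ψ (c st.2)) := by
      show ψ (c st.2) + st.1 • Z (ψ (c st.2)) - ψ p = _
      abel
    rw [hre]
    have hn1 : ‖ψ (c st.2) - ψ p‖ ≤ r/2 := by rw [← dist_eq_norm]; exact le_of_lt h4
    have hn2 : ‖st.1 • Z (ψ (c st.2))‖ ≤ r/2 := by
      rw [norm_smul, Real.norm_eq_abs]; exact hsZbound st hst
    calc ‖(ψ (c st.2) - ψ p) + st.1 • Z (ψ (c st.2))‖
        ≤ ‖ψ (c st.2) - ψ p‖ + ‖st.1 • Z (ψ (c st.2))‖ := norm_add_le _ _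
      _ ≤ r/2 + r/2 := add_le_add hn1 hn2
      _ = r := by ring
  have hφV : ∀ st ∈ box, φ st ∈ Vψ := fun st hst => hWtoV _ (hAW st hst)
  have hclosed : ∀ st ∈ box, x (φ st) = x (c st.2) + st.1 • e1 (c st.2) := by
    intro st hst
    obtain ⟨h1, h2⟩ := hboxmem st hst
    have hdm := hδmem st.2 h2
    have hxl := (hxline (ψ (c st.2)) hdm.2.2.2.1 st.1 (hsZbound st hst)).2
    have hid : ψi (ψ (c st.2)) = c st.2 := hliψ _ hdm.2.2.1
    rw [hid] at hxl
    exact hxl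
  have hIooδ : ∀ t : ℝ, t ∈ Set.Ioo (-δ) δ → |t| < δ := fun t ht => abs_lt.2 ⟨ht.1, ht.2⟩
  have hc_smooth : ContDiffOn ℝ (⊤ : ℕ∞) c (Set.Ioo (-δ) δ) := by
    have haff : ContDiff ℝ (⊤ : ℕ∞) (fun t : ℝ => χ p + ((0:ℝ), t)) :=
      contDiff_const.add (contDiff_const.prodMk contDiff_id)
    exact hχis.comp haff.contDiffOn (fun t ht => (hδmem t (hIooδ t ht)).1)
  have hψc_smooth : ContDiffOn ℝ (⊤ : ℕ∞) (fun t => ψ (c t)) (Set.Ioo (-δ) δ) :=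
    hψsmooth.comp hc_smooth (fun t ht => hVψΩ (hδmem t (hIooδ t ht)).2.2.1)
  have hboxsnd : Set.MapsTo (fun st : ℝ × ℝ => st.2) box (Set.Ioo (-δ) δ) :=
    fun st hst => hst.2
  have hψcs : ContDiffOn ℝ (⊤ : ℕ∞) (fun st : ℝ × ℝ => ψ (c st.2)) box :=
    hψc_smooth.comp contDiff_snd.contDiffOn hboxsnd
  have hZψcs : ContDiffOn ℝ (⊤ : ℕ∞) (fun st : ℝ × ℝ => Z (ψ (c st.2))) box := by
    apply hZsmooth.comp hψcs
    intro st hst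
    exact hball (Metric.closedBall_subset_closedBall (by linarith)
      (Metric.ball_subset_closedBall ((hδmem st.2 (hboxmem st hst).2).2.2.2.1)))
  have hAsmooth : ContDiffOn ℝ (⊤ : ℕ∞) A box :=
    hψcs.add (ContDiffOn.smul contDiff_fst.contDiffOn hZψcs)
  have hφsmooth : ContDiffOn ℝ (⊤ : ℕ∞) φ box := hψis.comp hAsmooth hAW
  have hφd2 : d2 (fderiv ℝ φ ((0:ℝ), (0:ℝ))) ≠ 0 := by
    have hc0' : χ p + ((0:ℝ), (0:ℝ)) = χ p := by simp
    have hχiDp : HasFDerivAt χi (fderiv ℝ χi (χ p)) (χ p) :=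
      ((hχis.contDiffAt (hWχo.mem_nhds hχpW)).differentiableAt (by simp)).hasFDerivAt
    have haffD : HasDerivAt (fun t : ℝ => χ p + ((0:ℝ), t)) ((0:ℝ), (1:ℝ)) 0 := by
      have h1 : HasDerivAt (fun t : ℝ => ((0:ℝ), t)) ((0:ℝ), (1:ℝ)) 0 :=
        (hasDerivAt_const 0 (0:ℝ)).prodMk (hasDerivAt_id 0)
      simpa using h1.const_add (χ p)
    set k := fderiv ℝ χi (χ p) ((0:ℝ), (1:ℝ)) with hk
    have hcD : HasDerivAt c k 0 := by
      have hb : HasFDerivAt χi (fderiv ℝ χi (χ p)) ((fun t : ℝ => χ p + ((0:ℝ), t)) 0) := by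
        show HasFDerivAt χi _ (χ p + ((0:ℝ), (0:ℝ)))
        rw [hc0']; exact hχiDp
      exact hb.comp_hasDerivAt 0 haffD
    have hRLχ : ∀ v, fderiv ℝ χ (χi (χ p)) (fderiv ℝ χi (χ p) v) = v := by
      have hχD : HasFDerivAt χ (fderiv ℝ χ (χi (χ p))) (χi (χ p)) :=
        ((hχsmooth.contDiffAt (hΩ.mem_nhds (hVχΩ (hWtoVχ _ hχpW)))).differentiableAt
          (by simp)).hasFDerivAt
      have h1 : HasFDerivAt (fun b => χ (χi b))
          ((fderiv ℝ χ (χi (χ p))).comp (fderiv ℝ χi (χ p))) (χ p) :=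
        hχD.comp (χ p) hχiDp
      have h2 : (fun b => χ (χi b)) =ᶠ[nhds (χ p)] id := by
        filter_upwards [hWχo.mem_nhds hχpW] with y hy using hriχ y hy
      have h3 := (h1.congr_of_eventuallyEq h2.symm).unique (hasFDerivAt_id (χ p))
      intro v
      calc fderiv ℝ χ (χi (χ p)) (fderiv ℝ χi (χ p) v)
          = ((fderiv ℝ χ (χi (χ p))).comp (fderiv ℝ χi (χ p))) v := rfl
        _ = v := by rw [h3]; rfl
    have hkne : k ≠ 0 := by
      intro h
      have hcontra := hRLχ ((0:ℝ), (1:ℝ))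
      rw [← hk, h, map_zero] at hcontra
      exact absurd hcontra (by simp [Prod.ext_iff])
    have hLk : ml (fderiv ℝ x p k) U = 0 := by
      have hX0D : HasDerivAt (fun t => x (c t)) (fderiv ℝ x p k) 0 := by
        have hxp : HasFDerivAt x (fderiv ℝ x p) (c 0) := by rw [hc0]; exact hxD p hp
        exact hxp.comp_hasDerivAt 0 hcD
      have hd := hasDerivAt_ml hX0D (hasDerivAt_const 0 U)
      have hevδ : ∀ᶠ t : ℝ in nhds 0, |t| < δ := by
        have hIoo : Set.Ioo (-δ) δ ∈ nhds (0:ℝ) := Ioo_mem_nhds (by linarith) hδpos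
        filter_upwards [hIoo] with t ht using abs_lt.2 ⟨ht.1, ht.2⟩
      have hconst : (fun t : ℝ => ml (x (c t)) U) =ᶠ[nhds 0] fun _ => (χ p).1 := by
        filter_upwards [hevδ] with t ht
        have hW := (hδmem t ht).1
        have h1 := hχfst (c t)
        rw [hriχ _ hW] at h1
        simpa using h1.symm
      have huniq := (hd.congr_of_eventuallyEq hconst.symm).unique (hasDerivAt_const 0 ((χ p).1))
      have hz := ml_zero (x (c 0))
      linarith [huniq]
    obtain ⟨w₁, hw1, hw2⟩ := hTan p hp
    have hψip : ψi (ψ p) = p := hliψ p hpVψ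
    have hZp : Z (ψ p) = (π.comp (fderiv ℝ x p)) w₁ := by
      show π (e1 (ψi (ψ p))) = _
      rw [hψip, ← hw1]
      rfl
    have hg2D : HasDerivAt (fun t => ψ (c t)) ((π.comp (fderiv ℝ x p)) k) 0 := by
      have hψp : HasFDerivAt ψ (π.comp (fderiv ℝ x p)) (c 0) := by rw [hc0]; exact hψD p hp
      exact hψp.comp_hasDerivAt 0 hcD
    have hZαD : HasDerivAt (fun t => Z (ψ (c t)))
        (fderiv ℝ Z (ψ p) ((π.comp (fderiv ℝ x p)) k)) 0 := by
      have hZp' : HasFDerivAt Z (fderiv ℝ Z (ψ p)) ((fun t => ψ (c t)) 0) := by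
        show HasFDerivAt Z _ (ψ (c 0))
        rw [hc0]
        exact ((hZsmooth.contDiffAt (hWψo.mem_nhds hψpW)).differentiableAt (by simp)).hasFDerivAt
      exact hZp'.comp_hasDerivAt 0 hg2D
    -- assemble the derivative of A at (0,0)
    have hB1 : HasFDerivAt (fun st : ℝ × ℝ => ψ (c st.2))
        ((ContinuousLinearMap.smulRight (1 : ℝ →L[ℝ] ℝ) ((π.comp (fderiv ℝ x p)) k)).comp
          (ContinuousLinearMap.snd ℝ ℝ ℝ)) ((0:ℝ), (0:ℝ)) :=
      hg2D.hasFDerivAt.comp (f := Prod.snd) ((0:ℝ), (0:ℝ)) hasFDerivAt_snd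
    have hB2 : HasFDerivAt (fun st : ℝ × ℝ => Z (ψ (c st.2)))
        ((ContinuousLinearMap.smulRight (1 : ℝ →L[ℝ] ℝ)
          (fderiv ℝ Z (ψ p) ((π.comp (fderiv ℝ x p)) k))).comp
          (ContinuousLinearMap.snd ℝ ℝ ℝ)) ((0:ℝ), (0:ℝ)) :=
      hZαD.hasFDerivAt.comp (f := Prod.snd) ((0:ℝ), (0:ℝ)) hasFDerivAt_snd
    have hsm := (hasFDerivAt_fst (p := ((0:ℝ), (0:ℝ))) (E := ℝ) (F := ℝ)).smul hB2
    have hAD := hB1.add hsm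
    have hADfd : HasFDerivAt A _ ((0:ℝ), (0:ℝ)) := hAD
    have hψiA : HasFDerivAt ψi (fderiv ℝ ψi (ψ p)) (A ((0:ℝ), (0:ℝ))) := by
      rw [hA00]; exact hψiD _ hψpW
    have hφD := hψiA.comp ((0:ℝ), (0:ℝ)) hADfd
    show d2 (fderiv ℝ (ψi ∘ A) ((0:ℝ), (0:ℝ))) ≠ 0
    rw [hφD.fderiv, d2_comp]
    apply mul_ne_zero
    · have hid : ∀ v, ((fderiv ℝ ψi (ψ p)).comp (π.comp (fderiv ℝ x p))) v = v := by
        intro v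
        have hv := hLRψ p hpVψ v
        rw [hψfderiv p hp] at hv
        exact hv
      have hcompeq : (fderiv ℝ ψi (ψ p)).comp (π.comp (fderiv ℝ x p))
          = ContinuousLinearMap.id ℝ (ℝ × ℝ) := ContinuousLinearMap.ext hid
      have hd2eq := congrArg d2 hcompeq
      rw [d2_comp, d2_id] at hd2eq
      intro h0
      rw [h0, zero_mul] at hd2eq
      exact one_ne_zero hd2eq.symm
    · -- d2 of the derivative of A
      have hM10 : ((ContinuousLinearMap.smulRight (1 : ℝ →L[ℝ] ℝ)
            ((π.comp (fderiv ℝ x p)) k)).comp (ContinuousLinearMap.snd ℝ ℝ ℝ) +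
          (((0:ℝ), (0:ℝ)).1 • (ContinuousLinearMap.smulRight (1 : ℝ →L[ℝ] ℝ)
            (fderiv ℝ Z (ψ p) ((π.comp (fderiv ℝ x p)) k))).comp
            (ContinuousLinearMap.snd ℝ ℝ ℝ) +
            (ContinuousLinearMap.fst ℝ ℝ ℝ).smulRight (Z (ψ (c ((0:ℝ), (0:ℝ)).2)))))
            ((1:ℝ), (0:ℝ)) = Z (ψ p) := by
        simp [hc0]
      have hM01 : ((ContinuousLinearMap.smulRight (1 : ℝ →L[ℝ] ℝ)
            ((π.comp (fderiv ℝ x p)) k)).comp (ContinuousLinearMap.snd ℝ ℝ ℝ) +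
          (((0:ℝ), (0:ℝ)).1 • (ContinuousLinearMap.smulRight (1 : ℝ →L[ℝ] ℝ)
            (fderiv ℝ Z (ψ p) ((π.comp (fderiv ℝ x p)) k))).comp
            (ContinuousLinearMap.snd ℝ ℝ ℝ) +
            (ContinuousLinearMap.fst ℝ ℝ ℝ).smulRight (Z (ψ (c ((0:ℝ), (0:ℝ)).2)))))
            ((0:ℝ), (1:ℝ)) = (π.comp (fderiv ℝ x p)) k := by
        simp
      rw [show d2 _ = (Z (ψ p)).1 * ((π.comp (fderiv ℝ x p)) k).2
          - (Z (ψ p)).2 * ((π.comp (fderiv ℝ x p)) k).1 by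
        simp only [d2, hM10, hM01]]
      rw [hZp]
      set N : ℝ × ℝ →L[ℝ] ℝ × ℝ := (ContinuousLinearMap.fst ℝ ℝ ℝ).smulRight w₁ +
        (ContinuousLinearMap.snd ℝ ℝ ℝ).smulRight k with hN
      have hN10 : N ((1:ℝ), (0:ℝ)) = w₁ := by simp [hN]
      have hN01 : N ((0:ℝ), (1:ℝ)) = k := by simp [hN]
      have hfactor : ((π.comp (fderiv ℝ x p)) w₁).1 * ((π.comp (fderiv ℝ x p)) k).2
          - ((π.comp (fderiv ℝ x p)) w₁).2 * ((π.comp (fderiv ℝ x p)) k).1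
          = d2 ((π.comp (fderiv ℝ x p)).comp N) := by
        simp only [d2, ContinuousLinearMap.comp_apply, hN10, hN01]
      rw [hfactor, d2_comp]
      apply mul_ne_zero
      · have hgoal := hd2ψ p hpVψ
        rw [hψfderiv p hp] at hgoal
        exact hgoal
      · have hd2N : d2 N = w₁.1 * k.2 - w₁.2 * k.1 := by
          simp only [d2, hN10, hN01]
        rw [hd2N]
        have hLw₁ : ((mlCLM U).comp (fderiv ℝ x p)) w₁ ≠ 0 := by
          show mlCLM U (fderiv ℝ x p w₁) ≠ 0
          rw [hw1, mlCLM_apply, hml_e1U p hp]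
          exact hsθ.ne'
        have hLk' : ((mlCLM U).comp (fderiv ℝ x p)) k = 0 := by
          show mlCLM U (fderiv ℝ x p k) = 0
          rw [mlCLM_apply]; exact hLk
        exact det_ne_zero_of_covector ((mlCLM U).comp (fderiv ℝ x p)) w₁ k hLw₁ hLk' hkne
  obtain ⟨V, W, φinv, hVo, hWo, h0V, hVbox, himgφ, hd2φ, hφinvs, hliφ, hriφ⟩ :=
    local_diffeo φ box hboxo hφsmooth ((0:ℝ), (0:ℝ)) hbox00 hφd2
  refine ⟨V, W, φ, φinv, hVo, hWo, ?_, ?_, hφsmooth.mono hVbox, hφinvs, himgφ, hliφ, hriφ, ?_⟩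
  · rw [← himgφ]
    rintro _ ⟨st, hst, rfl⟩
    exact hVψΩ (hφV st (hVbox hst))
  · rw [← himgφ]
    have hφ00 : φ ((0:ℝ), (0:ℝ)) = p := by
      rw [hφdef]; simp only [hA00]; exact hliψ p hpVψ
    rw [← hφ00]
    exact Set.mem_image_of_mem φ h0V
  · -- the metric computations
    intro q hqV
    obtain ⟨s, t⟩ := q
    have hqbox : ((s, t) : ℝ × ℝ) ∈ box := hVbox hqV
    obtain ⟨hsδ, htδ⟩ := hboxmem (s, t) hqbox
    have hdm := hδmem t htδ
    have hctΩ : c t ∈ Ω := hVψΩ hdm.2.2.1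
    have hWt : χ p + ((0:ℝ), t) ∈ Wχ := hdm.1
    have hχiDt : HasFDerivAt χi (fderiv ℝ χi (χ p + ((0:ℝ), t))) (χ p + ((0:ℝ), t)) :=
      ((hχis.contDiffAt (hWχo.mem_nhds hWt)).differentiableAt (by simp)).hasFDerivAt
    have haffD : HasDerivAt (fun τ : ℝ => χ p + ((0:ℝ), τ)) ((0:ℝ), (1:ℝ)) t := by
      have h1 : HasDerivAt (fun τ : ℝ => ((0:ℝ), τ)) ((0:ℝ), (1:ℝ)) t :=
        (hasDerivAt_const t (0:ℝ)).prodMk (hasDerivAt_id t)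
      simpa using h1.const_add (χ p)
    set wt := fderiv ℝ χi (χ p + ((0:ℝ), t)) ((0:ℝ), (1:ℝ)) with hwt
    have hcDt : HasDerivAt c wt t := hχiDt.comp_hasDerivAt t haffD
    set X0' := fderiv ℝ x (c t) wt with hX0'def
    set E1' := (sθ⁻¹ • -(co • fderiv ℝ ξ (c t))) wt with hE1'def
    have hX0D : HasDerivAt (fun τ => x (c τ)) X0' t := (hxD _ hctΩ).comp_hasDerivAt t hcDt
    have hE1D : HasDerivAt (fun τ => e1 (c τ)) E1' t := (he1D _ hctΩ).comp_hasDerivAt t hcDt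
    have hevδ : ∀ᶠ τ : ℝ in nhds t, |τ| < δ := by
      have habs := abs_lt.1 htδ
      have hIoo : Set.Ioo (-δ) δ ∈ nhds t := Ioo_mem_nhds habs.1 habs.2
      filter_upwards [hIoo] with τ hτ using abs_lt.2 ⟨hτ.1, hτ.2⟩
    -- closed form near (s,t)
    have hev : (x ∘ φ) =ᶠ[nhds ((s, t) : ℝ × ℝ)]
        fun st : ℝ × ℝ => x (c st.2) + st.1 • e1 (c st.2) := by
      filter_upwards [hboxo.mem_nhds hqbox] with st hst using hclosed st hst
    have hfeq := Filter.EventuallyEq.fderiv_eq (𝕜 := ℝ) hev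
    -- derivative of the closed form
    have hB1 : HasFDerivAt (fun st : ℝ × ℝ => x (c st.2))
        ((ContinuousLinearMap.smulRight (1 : ℝ →L[ℝ] ℝ) X0').comp
          (ContinuousLinearMap.snd ℝ ℝ ℝ)) ((s, t) : ℝ × ℝ) :=
      hX0D.hasFDerivAt.comp (f := Prod.snd) ((s, t) : ℝ × ℝ) hasFDerivAt_snd
    have hB2 : HasFDerivAt (fun st : ℝ × ℝ => e1 (c st.2))
        ((ContinuousLinearMap.smulRight (1 : ℝ →L[ℝ] ℝ) E1').comp
          (ContinuousLinearMap.snd ℝ ℝ ℝ)) ((s, t) : ℝ × ℝ) :=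
      hE1D.hasFDerivAt.comp (f := Prod.snd) ((s, t) : ℝ × ℝ) hasFDerivAt_snd
    have hsm := (hasFDerivAt_fst (p := ((s, t) : ℝ × ℝ)) (E := ℝ) (F := ℝ)).fun_smul hB2
    have hYD := hB1.fun_add hsm
    have h10 : fderiv ℝ (x ∘ φ) ((s, t) : ℝ × ℝ) ((1:ℝ), (0:ℝ)) = e1 (c t) := by
      rw [hfeq, hYD.fderiv]
      simp
    have h01 : fderiv ℝ (x ∘ φ) ((s, t) : ℝ × ℝ) ((0:ℝ), (1:ℝ)) = X0' + s • E1' := by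
      rw [hfeq, hYD.fderiv]
      simp
    constructor
    · rw [h10]; exact hml_e1 _ hctΩ
    · rw [h10, h01, ml_add, ml_smul]
      have hperp2 : ml (ξ (c t)) X0' = 0 := hperp _ hctΩ wt
      have hU2 : ml X0' U = 0 := by
        have hd := hasDerivAt_ml hX0D (hasDerivAt_const t U)
        have hconst : (fun τ : ℝ => ml (x (c τ)) U) =ᶠ[nhds t] fun _ => (χ p).1 := by
          filter_upwards [hevδ] with τ hτ
          have hW := (hδmem τ hτ).1
          have h1 := hχfst (c τ)
          rw [hriχ _ hW] at h1
          simpa using h1.symm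
        have huniq := (hd.congr_of_eventuallyEq hconst.symm).unique
          (hasDerivAt_const t ((χ p).1))
        have hz := ml_zero (x (c t))
        linarith [huniq]
      have hmle1X : ml (e1 (c t)) X0' = 0 := by
        show ml (sθ⁻¹ • (U - co • ξ (c t))) X0' = 0
        rw [ml_comm, ml_smul, ml_sub, ml_smul]
        have hpc : ml X0' (ξ (c t)) = 0 := by rw [ml_comm]; exact hperp2
        rw [hU2, hpc]
        ring
      have hmlE1E1' : ml (e1 (c t)) E1' = 0 := by
        have hd := hasDerivAt_ml hE1D hE1D
        have hconst : (fun τ : ℝ => ml (e1 (c τ)) (e1 (c τ))) =ᶠ[nhds t] fun _ => (1:ℝ) := by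
          filter_upwards [hevδ] with τ hτ using hml_e1 _ (hVψΩ (hδmem τ hτ).2.2.1)
        have huniq := (hd.congr_of_eventuallyEq hconst.symm).unique (hasDerivAt_const t 1)
        have hcm := ml_comm E1' (e1 (c t))
        linarith [huniq]
      rw [hmle1X, hmlE1E1']
      ring
end

section
/- Fix θ > 0 and a smooth function α : ℝ → ℝ, and let ψ = (ψ₁, ψ₂) : ℝ → ℝ² be smooth with ψ₁'(v) = sinh θ · α(v) sin v and ψ₂'(v) = −sinh θ · α(v) cos v. Define x(u,v) = (u cosh θ cos v + ψ₁(v), u cosh θ sin v + ψ₂(v), −u sinh θ) and λ(u,v) = u cosh θ − sinh θ · α(v). Then the normal n := ∂_u x ×_L ∂_v x satisfies n(u,v) = λ(u,v)·(sinh θ cos v, sinh θ sin v, −cosh θ), so ⟨n,n⟩ = −λ(u,v)² and ⟨n, (0,0,1)⟩ = λ(u,v)·cosh θ. Consequently, at every point where λ(u,v) ≠ 0, x is a spacelike immersion whose future-directed unit normal ξ satisfies ⟨ξ, (0,0,1)⟩ = −cosh θ; i.e. x is a constant angle surface with hyperbolic angle θ relative to (0,0,1). -/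
/-- The Lorentzian cross product on Minkowski 3-space. -/
def lcross (u v : Fin 3 → ℝ) : Fin 3 → ℝ :=
  ![u 1 * v 2 - u 2 * v 1, u 2 * v 0 - u 0 * v 2, u 1 * v 0 - u 0 * v 1]

/-- auxiliary linear map -/
noncomputable def Lmap (A B : Fin 3 → ℝ) : (ℝ × ℝ) →L[ℝ] (Fin 3 → ℝ) :=
  (ContinuousLinearMap.fst ℝ ℝ ℝ).smulRight A + (ContinuousLinearMap.snd ℝ ℝ ℝ).smulRight B

lemma Lmap_apply (A B : Fin 3 → ℝ) (w : ℝ × ℝ) : Lmap A B w = w.1 • A + w.2 • B := by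
  simp [Lmap]

/-- The canonical parametrization
`x(u,v) = (u cosh θ cos v + ψ₁(v), u cosh θ sin v + ψ₂(v), -u sinh θ)` with
`ψ₁' = sinh θ · α sin`, `ψ₂' = -sinh θ · α cos` has Lorentzian normal
`n = ∂_u x ×_L ∂_v x = λ · (sinh θ cos v, sinh θ sin v, -cosh θ)` where
`λ = u cosh θ - sinh θ · α(v)`; hence `⟨n,n⟩ = -λ²` and `⟨n, E₃⟩ = λ cosh θ`, and wherever
`λ ≠ 0` the map `x` is a spacelike immersion whose future-directed unit normal `ξ` makes the
constant hyperbolic angle `θ` with `E₃ = (0,0,1)`: `⟨ξ, E₃⟩ = -cosh θ`. -/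
theorem canonical_parametrization_constant_angle
    (θ : ℝ) (hθ : 0 < θ)
    (α : ℝ → ℝ) (hα : ContDiff ℝ (⊤ : ℕ∞) α)
    (ψ₁ ψ₂ : ℝ → ℝ) (hψ₁ : ContDiff ℝ (⊤ : ℕ∞) ψ₁) (hψ₂ : ContDiff ℝ (⊤ : ℕ∞) ψ₂)
    (hψ₁' : ∀ v : ℝ, deriv ψ₁ v = Real.sinh θ * (α v * Real.sin v))
    (hψ₂' : ∀ v : ℝ, deriv ψ₂ v = -(Real.sinh θ * (α v * Real.cos v)))
    (x : ℝ × ℝ → Fin 3 → ℝ)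
    (hx : x = fun p => ![p.1 * Real.cosh θ * Real.cos p.2 + ψ₁ p.2,
                          p.1 * Real.cosh θ * Real.sin p.2 + ψ₂ p.2,
                          -(p.1 * Real.sinh θ)])
    (lam : ℝ × ℝ → ℝ)
    (hlam : lam = fun p => p.1 * Real.cosh θ - Real.sinh θ * α p.2)
    (n : ℝ × ℝ → Fin 3 → ℝ)
    (hn : n = fun p => lcross (fderiv ℝ x p (1, 0)) (fderiv ℝ x p (0, 1))) :
    ∀ p : ℝ × ℝ,
      n p = lam p • ![Real.sinh θ * Real.cos p.2, Real.sinh θ * Real.sin p.2,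
                      -Real.cosh θ] ∧
      ml (n p) (n p) = -(lam p) ^ 2 ∧
      ml (n p) ![0, 0, 1] = lam p * Real.cosh θ ∧
      (lam p ≠ 0 →
        Function.Injective (fderiv ℝ x p) ∧
        ∃ ξ : Fin 3 → ℝ,
          ml ξ ξ = -1 ∧
          (∀ w : ℝ × ℝ, ml ξ (fderiv ℝ x p w) = 0) ∧
          ml ξ ![0, 0, 1] < 0 ∧
          ml ξ ![0, 0, 1] = -Real.cosh θ) := by
  intro p
  obtain ⟨u, v⟩ := p
  set c := Real.cosh θ with hc
  set s := Real.sinh θ with hs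
  have hs0 : 0 < s := Real.sinh_pos_iff.mpr hθ
  have hsc : s ^ 2 - c ^ 2 = -1 := by rw [hc, Real.cosh_sq]; ring
  have hsq : Real.sin v ^ 2 + Real.cos v ^ 2 = 1 := Real.sin_sq_add_cos_sq v
  -- the partial derivative vectors
  set A : Fin 3 → ℝ := ![c * Real.cos v, c * Real.sin v, -s] with hA
  set B : Fin 3 → ℝ := ![-(u * c * Real.sin v) + s * (α v * Real.sin v),
      u * c * Real.cos v + -(s * (α v * Real.cos v)), 0] with hB
  -- the full derivative
  have hψ₁d : HasDerivAt ψ₁ (s * (α v * Real.sin v)) v := by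
    rw [← hψ₁' v]; exact (hψ₁.differentiable (by simp) v).hasDerivAt
  have hψ₂d : HasDerivAt ψ₂ (-(s * (α v * Real.cos v))) v := by
    rw [← hψ₂' v]; exact (hψ₂.differentiable (by simp) v).hasDerivAt
  have hfst : HasFDerivAt (fun q : ℝ × ℝ => q.1) (ContinuousLinearMap.fst ℝ ℝ ℝ) (u, v) :=
    hasFDerivAt_fst
  have hsnd : HasFDerivAt (fun q : ℝ × ℝ => q.2) (ContinuousLinearMap.snd ℝ ℝ ℝ) (u, v) :=
    hasFDerivAt_snd
  have hcosv : HasFDerivAt (fun q : ℝ × ℝ => Real.cos q.2)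
      (((1 : ℝ →L[ℝ] ℝ).smulRight (-Real.sin v)).comp (ContinuousLinearMap.snd ℝ ℝ ℝ)) (u, v) :=
    by have h := (Real.hasDerivAt_cos v).hasFDerivAt.comp (u, v) hsnd; exact h.congr_fderiv (ContinuousLinearMap.ext fun _ => by simp [mul_comm])
  have hsinv : HasFDerivAt (fun q : ℝ × ℝ => Real.sin q.2)
      (((1 : ℝ →L[ℝ] ℝ).smulRight (Real.cos v)).comp (ContinuousLinearMap.snd ℝ ℝ ℝ)) (u, v) :=
    by have h := (Real.hasDerivAt_sin v).hasFDerivAt.comp (u, v) hsnd; exact h.congr_fderiv (ContinuousLinearMap.ext fun _ => by simp [mul_comm])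
  have hψ₁f : HasFDerivAt (fun q : ℝ × ℝ => ψ₁ q.2)
      (((1 : ℝ →L[ℝ] ℝ).smulRight (s * (α v * Real.sin v))).comp
        (ContinuousLinearMap.snd ℝ ℝ ℝ)) (u, v) :=
    hψ₁d.hasFDerivAt.comp (u, v) hsnd
  have hψ₂f : HasFDerivAt (fun q : ℝ × ℝ => ψ₂ q.2)
      (((1 : ℝ →L[ℝ] ℝ).smulRight (-(s * (α v * Real.cos v)))).comp
        (ContinuousLinearMap.snd ℝ ℝ ℝ)) (u, v) :=
    hψ₂d.hasFDerivAt.comp (u, v) hsnd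
  have key : HasFDerivAt x (Lmap A B) (u, v) := by
    rw [hx, hasFDerivAt_pi']
    intro i
    fin_cases i
    · have h := ((hfst.mul_const c).mul hcosv).add hψ₁f
      refine h.congr_fderiv ?_
      apply ContinuousLinearMap.ext
      rintro ⟨a, b⟩
      simp [Lmap, hA, hB]
      ring
    · have h := ((hfst.mul_const c).mul hsinv).add hψ₂f
      refine h.congr_fderiv ?_
      apply ContinuousLinearMap.ext
      rintro ⟨a, b⟩
      simp [Lmap, hA, hB]
      ring
    · have h := (hfst.mul_const s).neg
      refine h.congr_fderiv ?_
      apply ContinuousLinearMap.ext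
      rintro ⟨a, b⟩
      simp [Lmap, hA, hB]
      ring
  have hfd : fderiv ℝ x (u, v) = Lmap A B := key.fderiv
  have hd1 : fderiv ℝ x (u, v) (1, 0) = A := by
    rw [hfd, Lmap_apply]; simp
  have hd2 : fderiv ℝ x (u, v) (0, 1) = B := by
    rw [hfd, Lmap_apply]; simp
  have hlamv : lam (u, v) = u * c - s * α v := by rw [hlam]
  have hnval : n (u, v) = lam (u, v) • ![s * Real.cos v, s * Real.sin v, -c] := by
    rw [hn]
    simp only
    rw [hd1, hd2]
    funext i
    fin_cases i
    · simp [lcross, hA, hB, hlamv]; ring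
    · simp [lcross, hA, hB, hlamv]; ring
    · simp [lcross, hA, hB, hlamv]
      linear_combination (c * s * α v - c ^ 2 * u) * hsq
  refine ⟨hnval, ?_, ?_, ?_⟩
  · rw [hnval]
    simp only [ml, Pi.smul_apply, Matrix.cons_val_zero, Matrix.cons_val_one, Matrix.head_cons,
      Matrix.cons_val_two, Matrix.tail_cons, smul_eq_mul]
    linear_combination (lam (u, v) ^ 2 * s ^ 2) * hsq + (lam (u, v) ^ 2) * hsc
  · rw [hnval]
    simp only [ml, Pi.smul_apply, Matrix.cons_val_zero, Matrix.cons_val_one, Matrix.head_cons,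
      Matrix.cons_val_two, Matrix.tail_cons, smul_eq_mul]
    ring
  · intro hl
    constructor
    · -- injectivity
      rw [hfd]
      intro w w' hww
      have hww' : w.1 • A + w.2 • B = w'.1 • A + w'.2 • B := by
        rw [← Lmap_apply, ← Lmap_apply]; exact hww
      have h0 := congrFun hww' 0
      have h1 := congrFun hww' 1
      have h2 := congrFun hww' 2
      simp only [Pi.add_apply, Pi.smul_apply, smul_eq_mul, hA, hB,
        Matrix.cons_val_zero, Matrix.cons_val_one, Matrix.head_cons,
        Matrix.cons_val_two, Matrix.tail_cons] at h0 h1 h2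
      have hw1 : w.1 = w'.1 := by
        have hmul : w.1 * s = w'.1 * s := by linarith
        exact mul_right_cancel₀ (ne_of_gt hs0) hmul
      rw [hw1] at h0 h1
      have e0 : (w.2 - w'.2) * (lam (u, v) * Real.sin v) = 0 := by
        rw [hlamv]; linear_combination -h0
      have e1 : (w.2 - w'.2) * (lam (u, v) * Real.cos v) = 0 := by
        rw [hlamv]; linear_combination h1
      have hw2 : w.2 = w'.2 := by
        by_contra hne
        have hd : w.2 - w'.2 ≠ 0 := sub_ne_zero.mpr hne
        have hsin : lam (u, v) * Real.sin v = 0 := by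
          rcases mul_eq_zero.mp e0 with h | h
          · exact absurd h hd
          · exact h
        have hcos : lam (u, v) * Real.cos v = 0 := by
          rcases mul_eq_zero.mp e1 with h | h
          · exact absurd h hd
          · exact h
        have hzz : lam (u, v) ^ 2 = 0 := by
          linear_combination lam (u, v) * Real.sin v * hsin + lam (u, v) * Real.cos v * hcos -
            lam (u, v) ^ 2 * hsq
        exact hl (pow_eq_zero_iff (n := 2) (by norm_num) |>.mp hzz)
      exact Prod.ext hw1 hw2
    · -- the unit normal
      refine ⟨![-(s * Real.cos v), -(s * Real.sin v), c], ?_, ?_, ?_, ?_⟩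
      · simp only [ml, Matrix.cons_val_zero, Matrix.cons_val_one, Matrix.head_cons,
          Matrix.cons_val_two, Matrix.tail_cons]
        linear_combination s ^ 2 * hsq + hsc
      · intro w
        rw [hfd, Lmap_apply]
        simp only [ml, Pi.add_apply, Pi.smul_apply, smul_eq_mul, hA, hB,
          Matrix.cons_val_zero, Matrix.cons_val_one, Matrix.head_cons,
          Matrix.cons_val_two, Matrix.tail_cons]
        linear_combination (-(w.1 * c * s)) * hsq
      · have hc0 : 0 < c := Real.cosh_pos θ
        simp only [ml, Matrix.cons_val_zero, Matrix.cons_val_one, Matrix.head_cons,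
          Matrix.cons_val_two, Matrix.tail_cons]
        linarith
      · simp [ml]
end

section
/- The only spacelike cylinders that are constant angle surfaces are planes: let I be an open interval, γ : I → ℝ³ a smooth curve with ⟨γ'(s), γ'(s)⟩ = 1, and v ∈ ℝ³ with ⟨v, v⟩ = 1 and ⟨γ'(s), v⟩ = 0 for all s, so that ξ(s) := γ'(s) ×_L v is a unit timelike normal of the spacelike cylinder x(s,t) = γ(s) + t·v. If there exists U ∈ ℝ³ with ⟨U, U⟩ = −1 such that s ↦ ⟨ξ(s), U⟩ is constant on I, then γ''(s) = 0 for all s ∈ I; consequently γ is a straight line and the image of x is contained in an affine spacelike plane. -/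
namespace CACaux

lemma lcross0 (u v : Fin 3 → ℝ) : lcross u v 0 = u 1 * v 2 - u 2 * v 1 := rfl
lemma lcross1 (u v : Fin 3 → ℝ) : lcross u v 1 = u 2 * v 0 - u 0 * v 2 := rfl
lemma lcross2 (u v : Fin 3 → ℝ) : lcross u v 2 = u 1 * v 0 - u 0 * v 1 := rfl

lemma ml_symm (u w : Fin 3 → ℝ) : ml u w = ml w u := by simp only [ml]; ring

/-- Lorentzian Lagrange identity. -/
lemma lag (p w : Fin 3 → ℝ) (h1 : ml p p = 1) (h2 : ml w w = 1) (h3 : ml p w = 0) :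
    ml (lcross p w) (lcross p w) = -1 := by
  have key : ml (lcross p w) (lcross p w) = ml p w ^ 2 - ml p p * ml w w := by
    simp only [ml, lcross0, lcross1, lcross2]; ring
  rw [key, h1, h2, h3]; ring

/-- Decomposition of the Lorentzian norm of `U` in the frame `p, w, p ×_L w`. -/
lemma decompD (p w U : Fin 3 → ℝ) (h1 : ml p p = 1) (h2 : ml w w = 1) (h3 : ml p w = 0) :
    ml U U = ml U p ^ 2 + ml U w ^ 2 - ml U (lcross p w) ^ 2 := by
  simp only [ml, lcross0, lcross1, lcross2] at h1 h2 h3 ⊢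
  linear_combination (-U 1 * U 1 - U 0 * U 0 + w 1 * w 1 * U 2 * U 2 + w 1 * w 1 * U 1 * U 1 + 2 * w 0 * w 1 * U 0 * U 1 + w 0 * w 0 * U 2 * U 2 + w 0 * w 0 * U 0 * U 0 + (-2) * w 2 * w 1 * U 1 * U 2 + (-2) * w 2 * w 0 * U 0 * U 2) * h1 + (U 2 * U 2 - p 1 * p 1 * U 0 * U 0 + 2 * p 0 * p 1 * U 0 * U 1 - p 0 * p 0 * U 1 * U 1 + (-2) * p 2 * p 1 * U 1 * U 2 + (-2) * p 2 * p 0 * U 0 * U 2 + p 2 * p 2 * U 2 * U 2 + p 2 * p 2 * U 1 * U 1 + p 2 * p 2 * U 0 * U 0) * h2 + (-p 1 * w 1 * U 2 * U 2 - p 1 * w 1 * U 1 * U 1 + p 1 * w 1 * U 0 * U 0 + (-2) * p 1 * w 0 * U 0 * U 1 + (-2) * p 0 * w 1 * U 0 * U 1 - p 0 * w 0 * U 2 * U 2 + p 0 * w 0 * U 1 * U 1 - p 0 * w 0 * U 0 * U 0 + 2 * w 2 * p 1 * U 1 * U 2 + 2 * w 2 * p 0 * U 0 * U 2 + 2 *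 p 2 * w 1 * U 1 * U 2 + 2 * p 2 * w 0 * U 0 * U 2 - p 2 * w 2 * U 2 * U 2 - p 2 * w 2 * U 1 * U 1 - p 2 * w 2 * U 0 * U 0) * h3

/-- `(p ×_L w) ×_L w = p` for orthonormal spacelike `p, w`. -/
lemma crossE0 (p w : Fin 3 → ℝ) (h2 : ml w w = 1) (h3 : ml p w = 0) :
    lcross (lcross p w) w 0 = p 0 := by
  simp only [ml, lcross0, lcross1, lcross2] at h2 h3 ⊢
  linear_combination (p 0) * h2 + (-w 0) * h3
lemma crossE1 (p w : Fin 3 → ℝ) (h2 : ml w w = 1) (h3 : ml p w = 0) :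
    lcross (lcross p w) w 1 = p 1 := by
  simp only [ml, lcross0, lcross1, lcross2] at h2 h3 ⊢
  linear_combination (p 1) * h2 + (-w 1) * h3
lemma crossE2 (p w : Fin 3 → ℝ) (h2 : ml w w = 1) (h3 : ml p w = 0) :
    lcross (lcross p w) w 2 = p 2 := by
  simp only [ml, lcross0, lcross1, lcross2] at h2 h3 ⊢
  linear_combination (p 2) * h2 + (-w 2) * h3

/-- Frame decomposition of an arbitrary vector `q`. -/
lemma decompB0 (p w q : Fin 3 → ℝ) (h1 : ml p p = 1) (h2 : ml w w = 1) (h3 : ml p w = 0) :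
    q 0 = ml q p * p 0 + ml q w * w 0 - ml q (lcross p w) * (lcross p w) 0 := by
  simp only [ml, lcross0, lcross1, lcross2] at h1 h2 h3 ⊢
  linear_combination (-q 0 + w 0 * w 1 * q 1 + w 0 * w 0 * q 0 - w 2 * w 0 * q 2) * h1 + (-p 1 * p 1 * q 0 + p 0 * p 1 * q 1 - p 2 * p 0 * q 2 + p 2 * p 2 * q 0) * h2 + (p 1 * w 1 * q 0 - p 1 * w 0 * q 1 - p 0 * w 1 * q 1 - p 0 * w 0 * q 0 + w 2 * p 0 * q 2 + p 2 * w 0 * q 2 - p 2 * w 2 * q 0) * h3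
lemma decompB1 (p w q : Fin 3 → ℝ) (h1 : ml p p = 1) (h2 : ml w w = 1) (h3 : ml p w = 0) :
    q 1 = ml q p * p 1 + ml q w * w 1 - ml q (lcross p w) * (lcross p w) 1 := by
  simp only [ml, lcross0, lcross1, lcross2] at h1 h2 h3 ⊢
  linear_combination (-q 1 + w 1 * w 1 * q 1 + w 0 * w 1 * q 0 - w 2 * w 1 * q 2) * h1 + (p 0 * p 1 * q 0 - p 0 * p 0 * q 1 - p 2 * p 1 * q 2 + p 2 * p 2 * q 1) * h2 + (-p 1 * w 1 * q 1 - p 1 * w 0 * q 0 - p 0 * w 1 * q 0 + p 0 * w 0 * q 1 + w 2 * p 1 * q 2 + p 2 * w 1 * q 2 - p 2 * w 2 * q 1) * h3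
lemma decompB2 (p w q : Fin 3 → ℝ) (h1 : ml p p = 1) (h2 : ml w w = 1) (h3 : ml p w = 0) :
    q 2 = ml q p * p 2 + ml q w * w 2 - ml q (lcross p w) * (lcross p w) 2 := by
  simp only [ml, lcross0, lcross1, lcross2] at h1 h2 h3 ⊢
  linear_combination (-w 1 * w 1 * q 2 - w 0 * w 0 * q 2 + w 2 * w 1 * q 1 + w 2 * w 0 * q 0) * h1 + (-q 2 + p 2 * p 1 * q 1 + p 2 * p 0 * q 0 - p 2 * p 2 * q 2) * h2 + (p 1 * w 1 * q 2 + p 0 * w 0 * q 2 - w 2 * p 1 * q 1 - w 2 * p 0 * q 0 - p 2 * w 1 * q 1 - p 2 * w 0 * q 0 + p 2 * w 2 * q 2) * h3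

lemma hasDerivAt_ml_const {f : ℝ → Fin 3 → ℝ} {f' : Fin 3 → ℝ} {x : ℝ}
    (hf : HasDerivAt f f' x) (w : Fin 3 → ℝ) :
    HasDerivAt (fun t => ml (f t) w) (ml f' w) x := by
  have h0 := (hasDerivAt_pi.1 hf) 0
  have h1 := (hasDerivAt_pi.1 hf) 1
  have h2 := (hasDerivAt_pi.1 hf) 2
  exact ((h0.mul_const (w 0)).add (h1.mul_const (w 1))).sub (h2.mul_const (w 2))

lemma hasDerivAt_ml_self {f : ℝ → Fin 3 → ℝ} {f' : Fin 3 → ℝ} {x : ℝ}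
    (hf : HasDerivAt f f' x) :
    HasDerivAt (fun t => ml (f t) (f t)) (2 * ml f' (f x)) x := by
  have h0 := (hasDerivAt_pi.1 hf) 0
  have h1 := (hasDerivAt_pi.1 hf) 1
  have h2 := (hasDerivAt_pi.1 hf) 2
  have := ((h0.mul h0).add (h1.mul h1)).sub (h2.mul h2)
  refine this.congr_deriv ?_
  simp [ml]; ring

lemma hasDerivAt_mlcross {f : ℝ → Fin 3 → ℝ} {f' : Fin 3 → ℝ} {x : ℝ}
    (hf : HasDerivAt f f' x) (w U : Fin 3 → ℝ) :
    HasDerivAt (fun t => ml (lcross (f t) w) U) (ml (lcross f' w) U) x := by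
  have h0 := (hasDerivAt_pi.1 hf) 0
  have h1 := (hasDerivAt_pi.1 hf) 1
  have h2 := (hasDerivAt_pi.1 hf) 2
  have := ((((h1.mul_const (w 2)).sub (h2.mul_const (w 1))).mul_const (U 0)).add
      (((h2.mul_const (w 0)).sub (h0.mul_const (w 2))).mul_const (U 1))).sub
      (((h1.mul_const (w 0)).sub (h0.mul_const (w 1))).mul_const (U 2))
  exact this

/-- A function with vanishing derivative on an open convex set is constant there. -/
lemma const_on {E : Type*} [NormedAddCommGroup E] [NormedSpace ℝ E]
    {f : ℝ → E} {s : Set ℝ} (hconv : Convex ℝ s) (hop : IsOpen s)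
    (h : ∀ x ∈ s, HasDerivAt f 0 x) {x y : ℝ} (hx : x ∈ s) (hy : y ∈ s) : f x = f y := by
  refine hconv.is_const_of_fderivWithin_eq_zero
    (fun z hz => ((h z hz).differentiableAt).differentiableWithinAt) (fun z hz => ?_) hx hy
  rw [fderivWithin_of_isOpen hop hz, (h z hz).hasFDerivAt.fderiv]
  refine ContinuousLinearMap.ext fun t => ?_; simp

end CACaux

open CACaux in
/-- The only spacelike cylinders that are constant angle surfaces are planes: if the unit
normal `ξ(s) = γ'(s) ×_L v` of the spacelike cylinder `x(s,t) = γ(s) + t v` makes a constant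
Lorentzian product with some unit timelike vector `U`, then `γ'' = 0`, so `γ` is a straight
line and the image of `x` lies in an affine spacelike plane. -/
theorem constant_angle_cylinder_is_plane
    (a b : ℝ) (γ : ℝ → Fin 3 → ℝ)
    (hγ : ContDiffOn ℝ (⊤ : ℕ∞) γ (Set.Ioo a b))
    (hunit : ∀ s ∈ Set.Ioo a b, ml (deriv γ s) (deriv γ s) = 1)
    (v : Fin 3 → ℝ) (hv : ml v v = 1)
    (hperp : ∀ s ∈ Set.Ioo a b, ml (deriv γ s) v = 0)
    (U : Fin 3 → ℝ) (hU : ml U U = -1)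
    (hconst : ∃ C : ℝ, ∀ s ∈ Set.Ioo a b, ml (lcross (deriv γ s) v) U = C) :
    (∀ s ∈ Set.Ioo a b, deriv (deriv γ) s = 0) ∧
    (∀ s₀ ∈ Set.Ioo a b, ∀ s ∈ Set.Ioo a b,
      γ s = γ s₀ + (s - s₀) • deriv γ s₀) ∧
    (∀ s₀ ∈ Set.Ioo a b,
      ml (lcross (deriv γ s₀) v) (lcross (deriv γ s₀) v) = -1 ∧
      ∀ s ∈ Set.Ioo a b, ∀ t : ℝ,
        ml ((γ s + t • v) - γ s₀) (lcross (deriv γ s₀) v) = 0) := by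
  obtain ⟨C, hCC⟩ := hconst
  have hIo : IsOpen (Set.Ioo a b) := isOpen_Ioo
  have hIc : Convex ℝ (Set.Ioo a b) := convex_Ioo a b
  have hd1 : ∀ s ∈ Set.Ioo a b, HasDerivAt γ (deriv γ s) s := fun s hs =>
    ((hγ.contDiffAt (hIo.mem_nhds hs)).differentiableAt (by simp)).hasDerivAt
  have hγ' : ContDiffOn ℝ (⊤ : ℕ∞) (deriv γ) (Set.Ioo a b) := hγ.deriv_of_isOpen hIo (by simp)
  have hd2 : ∀ s ∈ Set.Ioo a b, HasDerivAt (deriv γ) (deriv (deriv γ) s) s := fun s hs =>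
    ((hγ'.contDiffAt (hIo.mem_nhds hs)).differentiableAt (by simp)).hasDerivAt
  -- core step: the second derivative vanishes
  have key : ∀ s ∈ Set.Ioo a b, deriv (deriv γ) s = 0 := by
    intro s₀ hs₀
    set p : Fin 3 → ℝ := deriv γ s₀ with hp
    set q : Fin 3 → ℝ := deriv (deriv γ) s₀ with hq
    set ξ : Fin 3 → ℝ := lcross p v with hξ
    -- (A) q ⟂ p
    have hA : ml q p = 0 := by
      have h0 : HasDerivAt (fun s => ml (deriv γ s) (deriv γ s)) 0 s₀ :=
        (hasDerivAt_const s₀ (1:ℝ)).congr_of_eventuallyEq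
          (Filter.eventuallyEq_of_mem (hIo.mem_nhds hs₀) (fun s hs => hunit s hs))
      have hD : HasDerivAt (fun s => ml (deriv γ s) (deriv γ s)) (2 * ml q p) s₀ :=
        hasDerivAt_ml_self (hd2 s₀ hs₀)
      have := hD.unique h0
      linarith
    -- (B) q ⟂ v
    have hB : ml q v = 0 := by
      have h0 : HasDerivAt (fun s => ml (deriv γ s) v) 0 s₀ :=
        (hasDerivAt_const s₀ (0:ℝ)).congr_of_eventuallyEq
          (Filter.eventuallyEq_of_mem (hIo.mem_nhds hs₀) (fun s hs => hperp s hs))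
      exact (hasDerivAt_ml_const (hd2 s₀ hs₀) v).unique h0
    -- (C) derivative of the constant-angle function
    have hC' : ml (lcross q v) U = 0 := by
      have h0 : HasDerivAt (fun s => ml (lcross (deriv γ s) v) U) 0 s₀ :=
        (hasDerivAt_const s₀ C).congr_of_eventuallyEq
          (Filter.eventuallyEq_of_mem (hIo.mem_nhds hs₀) (fun s hs => hCC s hs))
      exact (hasDerivAt_mlcross (hd2 s₀ hs₀) v U).unique h0
    -- q = -(ml q ξ) • ξ
    obtain ⟨κ, hκdef⟩ : ∃ κ : ℝ, ml q ξ = κ := ⟨_, rfl⟩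
    have hqd0 : q 0 = -(κ * ξ 0) := by
      have := decompB0 p v q (hunit s₀ hs₀) hv (hperp s₀ hs₀)
      rw [hA, hB, hκdef] at this; rw [this]; ring
    have hqd1 : q 1 = -(κ * ξ 1) := by
      have := decompB1 p v q (hunit s₀ hs₀) hv (hperp s₀ hs₀)
      rw [hA, hB, hκdef] at this; rw [this]; ring
    have hqd2 : q 2 = -(κ * ξ 2) := by
      have := decompB2 p v q (hunit s₀ hs₀) hv (hperp s₀ hs₀)
      rw [hA, hB, hκdef] at this; rw [this]; ring
    by_cases hκ : κ = 0
    · funext i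
      fin_cases i
      · show q 0 = (0 : Fin 3 → ℝ) 0
        rw [hqd0, hκ]; simp
      · show q 1 = (0 : Fin 3 → ℝ) 1
        rw [hqd1, hκ]; simp
      · show q 2 = (0 : Fin 3 → ℝ) 2
        rw [hqd2, hκ]; simp
    · exfalso
      -- ml p U = 0
      have hf0 : ml p U = 0 := by
        have e1 : ml (lcross q v) U = -κ * ml (lcross ξ v) U := by
          simp only [ml, lcross0, lcross1, lcross2, hqd0, hqd1, hqd2]; ring
        have e2 : ml (lcross ξ v) U = ml p U := by
          rw [hξ]
          simp only [ml, crossE0 p v hv (hperp s₀ hs₀), crossE1 p v hv (hperp s₀ hs₀),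
            crossE2 p v hv (hperp s₀ hs₀)]
        rw [e1, e2] at hC'
        rcases mul_eq_zero.1 hC' with h | h
        · exact absurd (neg_eq_zero.1 h) hκ
        · exact h
      -- from the frame decomposition of U at s₀ : ml U v ^ 2 - C ^ 2 = -1
      have hstar : ml U v ^ 2 - C ^ 2 = -1 := by
        have hD0 := decompD p v U (hunit s₀ hs₀) hv (hperp s₀ hs₀)
        rw [hU, ml_symm U p, hf0, ml_symm U ξ, hCC s₀ hs₀] at hD0
        linarith [hD0]
      -- hence ml (deriv γ s) U = 0 for all s in the interval
      have hfzero : ∀ s ∈ Set.Ioo a b, ml (deriv γ s) U = 0 := by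
        intro s hs
        have hDs := decompD (deriv γ s) v U (hunit s hs) hv (hperp s hs)
        rw [hU, ml_symm U (lcross (deriv γ s) v), hCC s hs] at hDs
        have h2 : ml U (deriv γ s) ^ 2 = 0 := by linarith
        rw [ml_symm]
        exact (pow_eq_zero_iff two_ne_zero).1 h2
      -- so the derivative of s ↦ ml (deriv γ s) U vanishes at s₀
      have hqU : ml q U = 0 := by
        have h0 : HasDerivAt (fun s => ml (deriv γ s) U) 0 s₀ :=
          (hasDerivAt_const s₀ (0:ℝ)).congr_of_eventuallyEq
            (Filter.eventuallyEq_of_mem (hIo.mem_nhds hs₀) (fun s hs => hfzero s hs))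
        exact (hasDerivAt_ml_const (hd2 s₀ hs₀) U).unique h0
      -- but ml q U = -(ml q ξ) * C, forcing C = 0
      have e3 : ml q U = -κ * ml ξ U := by
        simp only [ml, hqd0, hqd1, hqd2]; ring
      rw [e3, hCC s₀ hs₀] at hqU
      have hC0 : C = 0 := by
        rcases mul_eq_zero.1 hqU with h | h
        · exact absurd (neg_eq_zero.1 h) hκ
        · exact h
      rw [hC0] at hstar
      nlinarith [sq_nonneg (ml U v)]
  -- part 2 : γ is an affine line
  have hconstp : ∀ s ∈ Set.Ioo a b, ∀ s' ∈ Set.Ioo a b, deriv γ s = deriv γ s' := by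
    intro s hs s' hs'
    exact const_on hIc hIo (fun z hz => by rw [← key z hz]; exact hd2 z hz) hs hs'
  have part2 : ∀ s₀ ∈ Set.Ioo a b, ∀ s ∈ Set.Ioo a b,
      γ s = γ s₀ + (s - s₀) • deriv γ s₀ := by
    intro s₀ hs₀ s hs
    have hline : ∀ z ∈ Set.Ioo a b,
        HasDerivAt (fun u => γ u - (u - s₀) • deriv γ s₀) 0 z := by
      intro z hz
      have h1 : HasDerivAt (fun u : ℝ => (u - s₀) • deriv γ s₀) ((1:ℝ) • deriv γ s₀) z :=
        ((hasDerivAt_id z).sub_const s₀).smul_const (deriv γ s₀)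
      have := (hd1 z hz).sub h1
      rw [one_smul, hconstp z hz s₀ hs₀, sub_self] at this
      exact this
    have := const_on hIc hIo hline hs hs₀
    simp only [sub_self, zero_smul, sub_zero] at this
    exact eq_add_of_sub_eq this
  refine ⟨key, part2, ?_⟩
  intro s₀ hs₀
  refine ⟨lag _ _ (hunit s₀ hs₀) hv (hperp s₀ hs₀), ?_⟩
  intro s hs t
  rw [part2 s₀ hs₀ s hs]
  simp only [ml, Pi.add_apply, Pi.sub_apply, Pi.smul_apply, smul_eq_mul,
    lcross0, lcross1, lcross2]
  ring
end

section
/- Let I be an open interval and γ : I → ℝ³ a smooth curve with ⟨γ(s), γ(s)⟩ = 1 and ⟨γ'(s), γ'(s)⟩ = 1 for all s (a unit-speed curve in the de Sitter sphere S²₁). Suppose there exist w ∈ ℝ³ with ⟨w, w⟩ = −1 and c ∈ ℝ such that ⟨γ(s), w⟩ = c for all s (γ is a circle contained in a spacelike plane). Then the function s ↦ ⟨γ'(s) ×_L γ(s), w⟩ is constant on I; hence the cone x(s,t) = t·γ(s), whose unit normal is ξ(s) = γ'(s) ×_L γ(s), is a constant angle surface relative to the timelike direction w. -/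
/-- Lagrange-type identity: the square of `⟨u ×_L v, w⟩` equals minus the Gram determinant. -/
lemma key_sq (u v w : Fin 3 → ℝ) (c : ℝ)
    (h1 : ml v v = 1) (h2 : ml u u = 1) (h3 : ml u v = 0)
    (h4 : ml v w = c) (h5 : ml u w = 0) (h6 : ml w w = -1) :
    (ml (lcross u v) w) ^ 2 = 1 + c ^ 2 := by
  have H : (ml (lcross u v) w) ^ 2 =
      -(ml u u * (ml v v * ml w w - ml v w * ml v w)
        - ml u v * (ml u v * ml w w - ml v w * ml u w)
        + ml u w * (ml u v * ml v w - ml v v * ml u w)) := by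
    simp only [ml, lcross, Matrix.cons_val_zero, Matrix.cons_val_one, Matrix.head_cons,
      Matrix.cons_val_two, Matrix.tail_cons]
    ring
  rw [H, h1, h2, h3, h4, h5, h6]; ring

/-- If a unit-speed curve `γ` in the de Sitter sphere `S²₁` lies in a spacelike plane
(`⟨γ(s), w⟩ = c` with `w` unit timelike), then `⟨γ'(s) ×_L γ(s), w⟩` is constant, so the cone
`x(s,t) = t γ(s)`, whose unit normal is `ξ(s) = γ'(s) ×_L γ(s)`, is a constant angle surface
relative to the timelike direction `w`. -/
theorem circle_cone_is_constant_angle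
    (a b : ℝ) (γ : ℝ → Fin 3 → ℝ)
    (hγ : ContDiffOn ℝ (⊤ : ℕ∞) γ (Set.Ioo a b))
    (hS : ∀ s ∈ Set.Ioo a b, ml (γ s) (γ s) = 1)
    (hunit : ∀ s ∈ Set.Ioo a b, ml (deriv γ s) (deriv γ s) = 1)
    (w : Fin 3 → ℝ) (hw : ml w w = -1)
    (c : ℝ) (hplane : ∀ s ∈ Set.Ioo a b, ml (γ s) w = c) :
    ∃ C : ℝ, ∀ s ∈ Set.Ioo a b, ml (lcross (deriv γ s) (γ s)) w = C := by
  rcases le_or_gt b a with hba | hab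
  · exact ⟨0, fun s hs => absurd (lt_trans hs.1 hs.2) (not_lt.mpr hba)⟩
  set f : ℝ → ℝ := fun s => ml (lcross (deriv γ s) (γ s)) w with hf
  -- γ has a derivative at every point of Ioo a b
  have hdiff : ∀ s ∈ Set.Ioo a b, HasDerivAt γ (deriv γ s) s := by
    intro s hs
    have h1 : DifferentiableOn ℝ γ (Set.Ioo a b) := hγ.differentiableOn (by simp)
    exact ((h1 s hs).differentiableAt (isOpen_Ioo.mem_nhds hs)).hasDerivAt
  -- component derivatives
  have hcomp : ∀ s ∈ Set.Ioo a b, ∀ i : Fin 3,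
      HasDerivAt (fun t => γ t i) (deriv γ s i) s := by
    intro s hs i
    exact ((ContinuousLinearMap.proj i : (Fin 3 → ℝ) →L[ℝ] ℝ).hasFDerivAt).comp_hasDerivAt s
      (hdiff s hs)
  -- ⟨γ', w⟩ = 0 on Ioo
  have horthw : ∀ s ∈ Set.Ioo a b, ml (deriv γ s) w = 0 := by
    intro s hs
    have hD : HasDerivAt (fun t => ml (γ t) w) (ml (deriv γ s) w) s := by
      have h0 := (hcomp s hs 0).mul_const (w 0)
      have h1 := (hcomp s hs 1).mul_const (w 1)
      have h2 := (hcomp s hs 2).mul_const (w 2)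
      simpa [ml] using (h0.fun_add h1).fun_sub h2
    have heq : (fun t => ml (γ t) w) =ᶠ[nhds s] fun _ => c := by
      filter_upwards [isOpen_Ioo.mem_nhds hs] with t ht using hplane t ht
    have hD' : HasDerivAt (fun _ : ℝ => c) (ml (deriv γ s) w) s := hD.congr_of_eventuallyEq heq.symm
    have : ml (deriv γ s) w = deriv (fun _ : ℝ => c) s := (hD'.deriv).symm
    simpa using this
  -- ⟨γ', γ⟩ = 0 on Ioo
  have horthγ : ∀ s ∈ Set.Ioo a b, ml (deriv γ s) (γ s) = 0 := by
    intro s hs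
    have hD : HasDerivAt (fun t => ml (γ t) (γ t)) (2 * ml (deriv γ s) (γ s)) s := by
      have h0 := (hcomp s hs 0).fun_mul (hcomp s hs 0)
      have h1 := (hcomp s hs 1).fun_mul (hcomp s hs 1)
      have h2 := (hcomp s hs 2).fun_mul (hcomp s hs 2)
      have := (h0.fun_add h1).fun_sub h2
      convert this using 1
      all_goals try rfl
      simp [ml]; ring
    have heq : (fun t => ml (γ t) (γ t)) =ᶠ[nhds s] fun _ => (1 : ℝ) := by
      filter_upwards [isOpen_Ioo.mem_nhds hs] with t ht using hS t ht
    have hD' : HasDerivAt (fun _ : ℝ => (1 : ℝ)) (2 * ml (deriv γ s) (γ s)) s :=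
      hD.congr_of_eventuallyEq heq.symm
    have h2 : 2 * ml (deriv γ s) (γ s) = deriv (fun _ : ℝ => (1 : ℝ)) s := (hD'.deriv).symm
    simp at h2
    linarith
  -- pointwise: f s ^ 2 = 1 + c ^ 2
  have hsq : ∀ s ∈ Set.Ioo a b, f s ^ 2 = 1 + c ^ 2 :=
    fun s hs => key_sq (deriv γ s) (γ s) w c (hS s hs) (hunit s hs) (horthγ s hs)
      (hplane s hs) (horthw s hs) hw
  -- f is continuous on Ioo
  have hcont : ContinuousOn f (Set.Ioo a b) := by
    have hγc : ContinuousOn γ (Set.Ioo a b) := hγ.continuousOn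
    have hdc : ContinuousOn (deriv γ) (Set.Ioo a b) :=
      hγ.continuousOn_deriv_of_isOpen isOpen_Ioo (by simp)
    have hγi : ∀ i : Fin 3, ContinuousOn (fun s => γ s i) (Set.Ioo a b) :=
      fun i => (continuous_apply i).comp_continuousOn hγc
    have hdi : ∀ i : Fin 3, ContinuousOn (fun s => deriv γ s i) (Set.Ioo a b) :=
      fun i => (continuous_apply i).comp_continuousOn hdc
    have : f = fun s =>
        ((deriv γ s 1 * γ s 2 - deriv γ s 2 * γ s 1) * w 0
          + (deriv γ s 2 * γ s 0 - deriv γ s 0 * γ s 2) * w 1)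
          - (deriv γ s 1 * γ s 0 - deriv γ s 0 * γ s 1) * w 2 := by
      funext s
      simp [hf, ml, lcross]
    rw [this]
    exact ((((((hdi 1).mul (hγi 2)).sub ((hdi 2).mul (hγi 1))).mul continuousOn_const).add
      ((((hdi 2).mul (hγi 0)).sub ((hdi 0).mul (hγi 2))).mul continuousOn_const)).sub
      ((((hdi 1).mul (hγi 0)).sub ((hdi 0).mul (hγi 1))).mul continuousOn_const))
  -- base point
  have hmid : (a + b) / 2 ∈ Set.Ioo a b := ⟨by linarith, by linarith⟩
  refine ⟨f ((a + b) / 2), fun s hs => ?_⟩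
  by_contra hne
  -- opposite signs: f s * f s₀ < 0
  set s₀ := (a + b) / 2
  have hs2 := hsq s hs
  have hs02 := hsq s₀ hmid
  have hne' : f s ≠ f s₀ := hne
  have hopp : f s = -f s₀ := by
    have hz : (f s - f s₀) * (f s + f s₀) = 0 := by nlinarith
    rcases mul_eq_zero.mp hz with h | h
    · exact absurd (by linarith) hne'
    · linarith
  have hprod : f s * f s₀ < 0 := by nlinarith [sq_nonneg c]
  -- IVT gives a zero of f in uIcc s s₀ ⊆ Ioo a b
  have hsub : Set.uIcc s s₀ ⊆ Set.Ioo a b := Set.ordConnected_Ioo.uIcc_subset hs hmid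
  have h0mem : (0 : ℝ) ∈ Set.uIcc (f s) (f s₀) := by
    rcases lt_or_ge (f s) 0 with h | h
    · have : 0 ≤ f s₀ := by nlinarith
      exact Set.mem_uIcc.mpr (Or.inl ⟨le_of_lt h, this⟩)
    · have : f s₀ ≤ 0 := by nlinarith
      exact Set.mem_uIcc.mpr (Or.inr ⟨this, h⟩)
  obtain ⟨u, hu, hu0⟩ := intermediate_value_uIcc (hcont.mono hsub) h0mem
  have := hsq u (hsub hu)
  rw [hu0] at this
  nlinarith
end
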